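/- arXiv:2405.03886 — 7 statements merged into one kernel-verified Lean document; each statement's English description precedes it below -/
import Mathlib

section
/- Let f : V → W be a ring homomorphism between valuation rings. Then the following are equivalent: (1) f is faithfully flat; (2) f is injective and local; (3) f is injective and V equals the intersection of Frac(V) with W inside Frac(W). -/
open TensorProduct in
/-- Over a valuation ring, an injective ring hom to a domain gives a flat algebra. -/
theorem ValuationRing.flat_of_injective {V W : Type*}
    [CommRing V] [IsDomain V] [ValuationRing V]
    [CommRing W] [IsDomain W] (f : V →+* W) (hinj : Function.Injective f) :
    letI : Algebra V W := f.toAlgebra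
    Module.Flat V W := by
  letI : Algebra V W := f.toAlgebra
  have hsmul : ∀ (a : V) (w : W), a • w = f a * w := fun a w => by
    rw [Algebra.smul_def, RingHom.algebraMap_toAlgebra]
  rw [Module.Flat.iff_lift_lsmul_comp_subtype_injective]
  intro I hI
  obtain ⟨v, hv⟩ := (IsBezout.isPrincipal_of_FG I hI).principal
  have hvmem : v ∈ I := hv ▸ Ideal.subset_span rfl
  set g : V →ₗ[V] I := LinearMap.toSpanSingleton V I ⟨v, hvmem⟩ with hg
  have hgsurj : Function.Surjective g := by
    rintro ⟨x, hx⟩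
    rw [hv] at hx
    obtain ⟨r, hr⟩ := Ideal.mem_span_singleton'.mp hx
    exact ⟨r, Subtype.ext (by simpa [g, LinearMap.toSpanSingleton_apply, smul_eq_mul,
      mul_comm] using hr)⟩
  rw [← LinearMap.ker_eq_bot]
  rw [LinearMap.ker_eq_bot']
  intro z hz
  obtain ⟨y, rfl⟩ := LinearMap.rTensor_surjective (Q := W) hgsurj z
  obtain ⟨w, rfl⟩ := (TensorProduct.lid V W).symm.surjective y
  have hy : (TensorProduct.lid V W).symm w = (1 : V) ⊗ₜ[V] w := rfl
  rw [hy] at hz ⊢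
  have hz' : f v * w = 0 := by
    have : (LinearMap.rTensor W g) ((1 : V) ⊗ₜ[V] w) = (⟨v, hvmem⟩ : I) ⊗ₜ[V] w := by
      simp [LinearMap.rTensor_tmul, g, LinearMap.toSpanSingleton_apply]
    rw [this] at hz
    simpa [TensorProduct.lift.tmul, hsmul] using hz
  by_cases hv0 : v = 0
  · have : ((⟨v, hvmem⟩ : I) : I) = 0 := Subtype.ext (by simp [hv0])
    have h1 : (LinearMap.rTensor W g) ((1 : V) ⊗ₜ[V] w) = (⟨v, hvmem⟩ : I) ⊗ₜ[V] w := by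
      simp [LinearMap.rTensor_tmul, g, LinearMap.toSpanSingleton_apply]
    rw [h1, this, TensorProduct.zero_tmul]
  · have hfv : f v ≠ 0 := fun h => hv0 (hinj (by simpa using h))
    have hw : w = 0 := by
      rcases mul_eq_zero.mp hz' with h | h
      · exact absurd h hfv
      · exact h
    rw [hw, TensorProduct.tmul_zero, map_zero]

open TensorProduct in
/-- **Lemma (val-ext).** Let `f : V → W` be a ring homomorphism between valuation rings.
The following are equivalent:
1. `f` is faithfully flat;
2. `f` is injective and local;
3. `f` is injective and `V = Frac(V) ∩ W` inside `Frac(W)`, i.e. any fraction `a / b`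
   (with `a b : V`, `b ≠ 0`) whose image lies in `W` already lies in `V`. -/
theorem valuationRing_hom_faithfullyFlat_tfae {V W : Type*}
    [CommRing V] [IsDomain V] [ValuationRing V]
    [CommRing W] [IsDomain W] [ValuationRing W] (f : V →+* W) :
    List.TFAE
      [ (letI : Algebra V W := f.toAlgebra; Module.FaithfullyFlat V W),
        Function.Injective f ∧ IsLocalHom f,
        Function.Injective f ∧ ∀ a b : V, b ≠ 0 →
          (∃ w : W, f a = f b * w) → ∃ v : V, a = b * v ] := by
  letI : Algebra V W := f.toAlgebra
  have hsmul : ∀ (a : V) (w : W), a • w = f a * w := fun a w => by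
    rw [Algebra.smul_def, RingHom.algebraMap_toAlgebra]
  tfae_have 1 → 2 := by
    intro hff
    have hff : Module.FaithfullyFlat V W := hff
    have hinj : Function.Injective f := by
      rw [injective_iff_map_eq_zero]
      intro a ha
      by_contra ha0
      have hreg : IsSMulRegular V a := fun x y h => by
        exact mul_left_cancel₀ ha0 (by simpa [smul_eq_mul] using h)
      have hreg2 : IsSMulRegular (V ⊗[V] W) a := hreg.rTensor W
      have hregW : IsSMulRegular W a :=
        ((TensorProduct.lid V W).toEquiv.isSMulRegular_congr
          (fun x => map_smul (TensorProduct.lid V W) a x)).mp hreg2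
      have : (1 : W) = 0 := hregW (by simp [hsmul, ha])
      exact one_ne_zero this
    refine ⟨hinj, ⟨fun a ha => ?_⟩⟩
    by_contra hnu
    have hne : Ideal.span {a} ≠ (⊤ : Ideal V) := fun h =>
      hnu (Ideal.span_singleton_eq_top.mp h)
    have htop : Ideal.span {a} • (⊤ : Submodule V W) = ⊤ := by
      rw [eq_top_iff]
      intro w _
      have : w = a • ((↑ha.unit⁻¹ : W) * w) := by
        rw [hsmul, ← mul_assoc, IsUnit.mul_val_inv, one_mul]
      rw [this]
      exact Submodule.smul_mem_smul (Ideal.mem_span_singleton_self a) trivial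
    exact ((Module.FaithfullyFlat.iff_flat_and_proper_ideal V W).mp hff).2 _ hne htop
  tfae_have 2 → 3 := by
    rintro ⟨hinj, hloc⟩
    refine ⟨hinj, fun a b hb ⟨w, hw⟩ => ?_⟩
    obtain ⟨c, hc | hc⟩ := ValuationRing.cond a b
    · -- a * c = b
      have hfb0 : f b ≠ 0 := fun h => hb (hinj (by simpa using h))
      have h1 : w * f c = 1 := by
        have h2 : f b * 1 = f b * (w * f c) := by
          calc f b * 1 = f b := mul_one _
            _ = f (a * c) := by rw [hc]
            _ = f a * f c := map_mul f a c
            _ = f b * (w * f c) := by rw [hw]; ring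
        exact (mul_left_cancel₀ hfb0 h2).symm
      have hcu : IsUnit c := hloc.map_nonunit c
        (IsUnit.of_mul_eq_one (a := f c) w (by rw [mul_comm]; exact h1))
      refine ⟨(↑hcu.unit⁻¹ : V), ?_⟩
      rw [← hc, mul_assoc, hcu.mul_val_inv, mul_one]
    · exact ⟨c, hc.symm⟩
  tfae_have 3 → 2 := by
    rintro ⟨hinj, h3⟩
    refine ⟨hinj, ⟨fun a ha => ?_⟩⟩
    have ha0 : a ≠ 0 := by
      rintro rfl
      simp only [map_zero] at ha
      exact not_isUnit_zero ha
    obtain ⟨u, hu⟩ := h3 1 a ha0 ⟨(↑ha.unit⁻¹ : W), by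
      rw [map_one, IsUnit.mul_val_inv]⟩
    exact IsUnit.of_mul_eq_one (a := a) u (by rw [← hu])
  tfae_have 2 → 1 := by
    rintro ⟨hinj, hloc⟩
    have hflat : Module.Flat V W := ValuationRing.flat_of_injective f hinj
    refine (Module.FaithfullyFlat.iff_flat_and_proper_ideal V W).mpr ⟨hflat, ?_⟩
    intro I hI htop
    have hle : I • (⊤ : Submodule V W) ≤
        (IsLocalRing.maximalIdeal W).restrictScalars V := by
      refine Submodule.smul_le.mpr fun r hr w _ => ?_
      have hr' : ¬IsUnit r := fun hu => hI (Ideal.eq_top_of_isUnit_mem I hr hu)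
      have hfr : ¬IsUnit (f r) := fun hu => hr' (hloc.map_nonunit r hu)
      have : f r ∈ IsLocalRing.maximalIdeal W := hfr
      simpa [hsmul] using Ideal.mul_mem_right w _ this
    rw [htop] at hle
    have h1 : (1 : W) ∈ IsLocalRing.maximalIdeal W := hle trivial
    exact (IsLocalRing.maximalIdeal.isMaximal W).ne_top (Ideal.eq_top_of_isUnit_mem _ h1 isUnit_one)
  tfae_finish
end

section
/- Let A → B be an injective integral homomorphism of normal domains with A Noetherian, and let π be a nonzero element of A. Suppose B is the union of a directed system of Noetherian normal A-subalgebras. Then the set of minimal prime ideals of B/πB coincides with the set of height-1 prime ideals of B containing π. -/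
open Polynomial

open Polynomial

lemma aux_coeff_mem_of_mem_map {R S : Type*} [CommRing R] [IsDomain R] [IsIntegrallyClosed R]
    [CommRing S] [IsDomain S] [Algebra R S] [NoZeroSMulDivisors R S] [Algebra.IsIntegral R S]
    {r : Ideal R} (hr : r.IsPrime) {y : S} (hy : y ∈ r.map (algebraMap R S)) :
    ∀ i < (minpoly R y).natDegree, (minpoly R y).coeff i ∈ r := by
  classical
  -- write y as a finite combination
  obtain ⟨n, c, g, hsum⟩ := Submodule.mem_span_set'.mp hy
  choose a ha hag using fun i => (g i).2
  have hy' : y = ∑ i, a i • (c i : S) := by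
    rw [← hsum]
    refine Finset.sum_congr rfl fun i _ => ?_
    rw [← hag i, smul_eq_mul, Algebra.smul_def, mul_comm]
  set T := Algebra.adjoin R (Set.range c) with hT
  have hcT : ∀ i, c i ∈ T := fun i => Algebra.subset_adjoin ⟨i, rfl⟩
  have hfg : T.toSubmodule.FG :=
    fg_adjoin_of_finite (Set.finite_range c) fun x _ => Algebra.IsIntegral.isIntegral x
  haveI : Module.Finite R T := Module.Finite.iff_fg.mpr hfg
  have hyT : y ∈ T := by
    rw [hy']
    exact Submodule.sum_smul_mem T.toSubmodule a fun i _ => hcT i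
  set f : Module.End R T := Algebra.lmul R T ⟨y, hyT⟩ with hf
  have hrange : LinearMap.range f ≤ r • (⊤ : Submodule R T) := by
    rintro z ⟨t, rfl⟩
    have : f t = ∑ i, a i • ((⟨c i, hcT i⟩ : T) * t) := by
      apply Subtype.ext
      push_cast
      show y * (t : S) = _
      rw [hy', Finset.sum_mul]
      refine Finset.sum_congr rfl fun i _ => ?_
      rw [smul_mul_assoc]
    rw [this]
    exact Submodule.sum_mem _ fun i _ => Submodule.smul_mem_smul (ha i) Submodule.mem_top
  obtain ⟨p, pmonic, -, hpcoeff, hpaeval⟩ :=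
    LinearMap.exists_monic_and_coeff_mem_pow_and_aeval_eq_zero_of_range_le_smul R f r hrange
  -- `p` kills `y` in `T`, hence in `S`
  have haevalT : Polynomial.aeval (⟨y, hyT⟩ : T) p = 0 := by
    have h1 : Polynomial.aeval f p = Algebra.lmul R T (Polynomial.aeval (⟨y, hyT⟩ : T) p) :=
      (Polynomial.aeval_algHom_apply (Algebra.lmul R T) _ _)
    have h2 := congrArg (fun (z : Module.End R T) => z 1) (h1.symm.trans hpaeval)
    simpa using h2
  have haevalS : Polynomial.aeval y p = 0 := by
    have := congrArg (algebraMap T S) haevalT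
    rwa [map_zero, ← Polynomial.aeval_algebraMap_apply] at this
  have hyint : IsIntegral R y := Algebra.IsIntegral.isIntegral y
  obtain ⟨h, hph⟩ := minpoly.isIntegrallyClosed_dvd hyint haevalS
  -- reduce mod r
  set φ := Ideal.Quotient.mk r with hφ
  have hg : (minpoly R y).Monic := minpoly.monic hyint
  have hh : h.Monic := by
    have : ((minpoly R y) * h).Monic := hph ▸ pmonic
    exact hg.of_mul_monic_left this
  have hpmap : p.map φ = X ^ p.natDegree := by
    ext k
    rw [coeff_map, coeff_X_pow]
    rcases lt_trichotomy k p.natDegree with hk | hk | hk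
    · have : p.coeff k ∈ r := by
        have := hpcoeff k
        refine Ideal.pow_le_self (Nat.sub_ne_zero_of_lt hk) this
      simp [if_neg hk.ne, hφ, Ideal.Quotient.eq_zero_iff_mem.2 this]
    · simp [hk, pmonic.coeff_natDegree]
    · simp [coeff_eq_zero_of_natDegree_lt hk, if_neg hk.ne']
  have hmul : (minpoly R y).map φ * h.map φ = X ^ p.natDegree := by
    rw [← Polynomial.map_mul, ← hph, hpmap]
  have hgne : (minpoly R y).map φ ≠ 0 := (hg.map φ).ne_zero
  have hhne : h.map φ ≠ 0 := (hh.map φ).ne_zero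
  have hntd : ((minpoly R y).map φ).natTrailingDegree + (h.map φ).natTrailingDegree
      = p.natDegree := by
    rw [← natTrailingDegree_mul hgne hhne, hmul, natTrailingDegree_X_pow]
  have hnd : ((minpoly R y).map φ).natDegree + (h.map φ).natDegree = p.natDegree := by
    rw [← natDegree_mul hgne hhne, hmul, natDegree_X_pow]
  have key : ((minpoly R y).map φ).natTrailingDegree = ((minpoly R y).map φ).natDegree := by
    have h1 := natTrailingDegree_le_natDegree ((minpoly R y).map φ)
    have h2 := natTrailingDegree_le_natDegree (h.map φ)
    omega
  intro i hi
  have hi' : i < ((minpoly R y).map φ).natTrailingDegree := by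
    rwa [key, hg.natDegree_map]
  have := coeff_eq_zero_of_lt_natTrailingDegree hi'
  rw [coeff_map] at this
  exact Ideal.Quotient.eq_zero_iff_mem.mp this

lemma aux_monic_eq {R : Type*} [CommRing R] [IsDomain R] {g h : R[X]} (hg : g.Monic)
    (hh : h.Monic) (hdvd : g ∣ h) (hdeg : h.natDegree ≤ g.natDegree) : g = h := by
  obtain ⟨u, rfl⟩ := hdvd
  have hu : u ≠ 0 := by
    rintro rfl
    rw [mul_zero] at hh
    exact hh.ne_zero rfl
  have hdu : u.natDegree = 0 := by
    have := natDegree_mul hg.ne_zero hu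
    omega
  have hC : u = C (u.coeff 0) := eq_C_of_natDegree_eq_zero hdu
  have hlc : u.coeff 0 = 1 := by
    have := hh.leadingCoeff
    rwa [leadingCoeff_mul, hg.leadingCoeff, one_mul, hC, leadingCoeff_C] at this
  rw [hC, hlc, map_one, mul_one]

theorem NoZeroSMulDivisors.of_algebraMap_injective {R A : Type*} [CommRing R] [Ring A]
    [Algebra R A] [NoZeroDivisors A] (h : Function.Injective (algebraMap R A)) :
    NoZeroSMulDivisors R A :=
  ⟨fun {c x} hcx => by
    rw [Algebra.smul_def, mul_eq_zero] at hcx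
    exact hcx.imp_left fun h' => h (by rw [h', map_zero])⟩

/-- Key step of Atiyah–Macdonald 5.16: if `x * s ∈ r·S` with `x ∉ r`, then a power of `s`
lies in `r·S`. -/
lemma aux_pow_mem {R S : Type*} [CommRing R] [IsDomain R] [IsIntegrallyClosed R]
    [CommRing S] [IsDomain S] [Algebra R S] (hinj : Function.Injective (algebraMap R S))
    [Algebra.IsIntegral R S]
    {r : Ideal R} (hr : r.IsPrime) {x : R} {s : S}
    (hxs : algebraMap R S x * s ∈ r.map (algebraMap R S)) (hx : x ∉ r) :
    ∃ m : ℕ, 0 < m ∧ s ^ m ∈ r.map (algebraMap R S) := by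
  haveI : NoZeroSMulDivisors R S := NoZeroSMulDivisors.of_algebraMap_injective hinj
  have hx0 : x ≠ 0 := fun h => hx (h ▸ r.zero_mem)
  set K := FractionRing R
  set L := FractionRing S
  haveI : NoZeroSMulDivisors R L := NoZeroSMulDivisors.of_algebraMap_injective
    (by
      rw [IsScalarTower.algebraMap_eq R S L]
      exact (IsFractionRing.injective S L).comp hinj)
  letI : Algebra K L := FractionRing.liftAlgebra R L
  haveI : IsScalarTower R K L := FractionRing.isScalarTower_liftAlgebra R L
  set y : S := algebraMap R S x * s with hy
  have hyint : IsIntegral R y := Algebra.IsIntegral.isIntegral y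
  have hsint : IsIntegral R s := Algebra.IsIntegral.isIntegral s
  set g := minpoly R y with hgdef
  set h := minpoly R s with hhdef
  have hgL : minpoly K (algebraMap S L y) = g.map (algebraMap R K) :=
    minpoly.isIntegrallyClosed_eq_field_fractions K L hyint
  have hhL : minpoly K (algebraMap S L s) = h.map (algebraMap R K) :=
    minpoly.isIntegrallyClosed_eq_field_fractions K L hsint
  set xK : K := algebraMap R K x with hxK
  have hxK0 : xK ≠ 0 := fun h0 => hx0 (IsFractionRing.injective R K (by simp [hxK] at h0; simp [h0]))
  have hXL : algebraMap K L xK ≠ 0 := by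
    simpa using (map_ne_zero_iff (algebraMap K L) (algebraMap K L).injective).mpr hxK0
  have hyL : algebraMap K L xK * algebraMap S L s = algebraMap S L y := by
    rw [hy, map_mul, ← IsScalarTower.algebraMap_apply R S L,
      IsScalarTower.algebraMap_apply R K L]
  have hdvd1 : minpoly K (algebraMap S L y) ∣ (minpoly K (algebraMap S L s)).scaleRoots xK := by
    have h1 := scaleRoots_aeval_eq_zero (r := xK) (minpoly.aeval K (algebraMap S L s))
    rw [hyL] at h1
    exact minpoly.dvd _ _ h1
  have hdvd2 : minpoly K (algebraMap S L s) ∣ (minpoly K (algebraMap S L y)).scaleRoots xK⁻¹ := by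
    have h1 := scaleRoots_aeval_eq_zero (r := xK⁻¹) (minpoly.aeval K (algebraMap S L y))
    have h2 : algebraMap K L xK⁻¹ * algebraMap S L y = algebraMap S L s := by
      rw [← hyL, map_inv₀, inv_mul_cancel_left₀ hXL]
    rw [h2] at h1
    exact minpoly.dvd _ _ h1
  have hymonic : (minpoly K (algebraMap S L y)).Monic := by
    rw [hgL]; exact (minpoly.monic hyint).map _
  have hsmonic : (minpoly K (algebraMap S L s)).Monic := by
    rw [hhL]; exact (minpoly.monic hsint).map _
  have hdegeq : (minpoly K (algebraMap S L s)).natDegree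
      = (minpoly K (algebraMap S L y)).natDegree := by
    have h1 := natDegree_le_of_dvd hdvd1 (scaleRoots_ne_zero hsmonic.ne_zero xK)
    have h2 := natDegree_le_of_dvd hdvd2 (scaleRoots_ne_zero hymonic.ne_zero xK⁻¹)
    rw [natDegree_scaleRoots] at h1 h2
    omega
  have heq : minpoly K (algebraMap S L y) = (minpoly K (algebraMap S L s)).scaleRoots xK := by
    refine aux_monic_eq hymonic ((monic_scaleRoots_iff xK).mpr hsmonic) hdvd1 ?_
    rw [natDegree_scaleRoots, hdegeq]
  set n := h.natDegree with hn
  have hnpos : 0 < n := minpoly.natDegree_pos hsint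
  have e2 : (h.map (algebraMap R K)).natDegree = n := (minpoly.monic hsint).natDegree_map _
  -- compare coefficients
  have hcoeff : ∀ i < n, h.coeff i * x ^ (n - i) = g.coeff i := by
    intro i hi
    apply IsFractionRing.injective R K
    have h3 := congrArg (fun P => P.coeff i) heq
    simp only [hgL, hhL, coeff_scaleRoots, coeff_map, e2] at h3
    rw [map_mul, map_pow]
    exact h3.symm
  have hglow : ∀ i < g.natDegree, g.coeff i ∈ r := aux_coeff_mem_of_mem_map hr hxs
  have hgdeg : g.natDegree = n := by
    have e1 : (g.map (algebraMap R K)).natDegree = g.natDegree :=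
      (minpoly.monic hyint).natDegree_map _
    have e2 : (h.map (algebraMap R K)).natDegree = h.natDegree :=
      (minpoly.monic hsint).natDegree_map _
    rw [← e1, ← hgL, ← hdegeq, hhL, e2]
  have hhlow : ∀ i < n, h.coeff i ∈ r := by
    intro i hi
    have hmem : h.coeff i * x ^ (n - i) ∈ r := by
      rw [hcoeff i hi]
      exact hglow i (by omega)
    rcases hr.mem_or_mem hmem with h1 | h1
    · exact h1
    · exact absurd (hr.mem_of_pow_mem _ h1) hx
  refine ⟨n, hnpos, ?_⟩
  have haev : Polynomial.aeval s h = 0 := minpoly.aeval R s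
  rw [aeval_eq_sum_range, Finset.sum_range_succ, ← hn,
    (minpoly.monic hsint).coeff_natDegree] at haev
  have hsn : s ^ n = -∑ i ∈ Finset.range n, h.coeff i • s ^ i := by
    rw [eq_neg_iff_add_eq_zero, add_comm]
    simpa using haev
  rw [hsn]
  refine Submodule.neg_mem _ (Submodule.sum_mem _ fun i hi => ?_)
  rw [Algebra.smul_def]
  exact Ideal.mul_mem_right _ _
    (Ideal.mem_map_of_mem _ (hhlow i (Finset.mem_range.mp hi)))

/-- **Going-down** for an integral extension of domains with integrally closed base. -/
lemma aux_going_down {R S : Type*} [CommRing R] [IsDomain R] [IsIntegrallyClosed R]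
    [CommRing S] [IsDomain S] [Algebra R S] (hinj : Function.Injective (algebraMap R S))
    [Algebra.IsIntegral R S]
    {r : Ideal R} {Q : Ideal S} (hr : r.IsPrime) (hQ : Q.IsPrime)
    (hrq : r ≤ Q.comap (algebraMap R S)) :
    ∃ P : Ideal S, P.IsPrime ∧ P ≤ Q ∧ P.comap (algebraMap R S) = r := by
  classical
  haveI := hQ
  set T := Localization.AtPrime Q
  have hcompl : Q.primeCompl ≤ nonZeroDivisors S := fun z hz =>
    mem_nonZeroDivisors_of_ne_zero (fun h0 => hz (h0 ▸ Q.zero_mem))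
  have hSTinj : Function.Injective (algebraMap S T) := IsLocalization.injective T hcompl
  set I := r.map (algebraMap R T) with hI
  have hmm : (r.map (algebraMap R S)).map (algebraMap S T) = I := by
    rw [hI, Ideal.map_map]
    rfl
  have hclaim : ∀ a : R, algebraMap R T a ∈ I → a ∈ r := by
    intro a haI
    rw [← hmm] at haI
    obtain ⟨⟨⟨ys, hys⟩, m⟩, hm⟩ :=
      (IsLocalization.mem_map_algebraMap_iff (M := Q.primeCompl) (S := T)).mp haI
    have h1 : algebraMap S T (algebraMap R S a * (m : S)) = algebraMap S T ys := by
      rw [map_mul, ← IsScalarTower.algebraMap_apply R S T]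
      exact hm
    have hxs : algebraMap R S a * (m : S) ∈ r.map (algebraMap R S) := by
      rw [hSTinj h1]; exact hys
    by_contra har
    obtain ⟨k, hk, hmem⟩ := aux_pow_mem hinj hr hxs har
    have hQk : (m : S) ^ k ∈ Q := (Ideal.map_le_iff_le_comap.mpr hrq) hmem
    exact m.2 (hQ.mem_of_pow_mem _ hQk)
  set W : Submonoid T := r.primeCompl.map (algebraMap R T) with hW
  have hdisj : Disjoint (I : Set T) (W : Set T) := Set.disjoint_left.mpr (by
    rintro z hzI ⟨u, hu, rfl⟩
    exact hu (hclaim u hzI))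
  obtain ⟨M, hM, hIM, hMdisj⟩ := Ideal.exists_le_prime_disjoint I W hdisj
  refine ⟨M.comap (algebraMap S T), hM.comap _, ?_, ?_⟩
  · have hle : M ≤ IsLocalRing.maximalIdeal T := IsLocalRing.le_maximalIdeal hM.ne_top
    have := Ideal.comap_mono (f := algebraMap S T) hle
    rwa [← Ideal.under_def, ← Ideal.under_def, Localization.AtPrime.comap_maximalIdeal] at this
  · apply le_antisymm
    · intro a ha
      rw [Ideal.mem_comap, Ideal.mem_comap, ← IsScalarTower.algebraMap_apply R S T] at ha
      by_contra har
      exact Set.disjoint_left.mp hMdisj ha ⟨a, har, rfl⟩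
    · intro a ha
      rw [Ideal.mem_comap, Ideal.mem_comap, ← IsScalarTower.algebraMap_apply R S T]
      exact hIM (Ideal.mem_map_of_mem _ ha)

/-- A localization of an integrally closed domain at a prime is integrally closed. -/
lemma aux_IC_atPrime {R : Type*} [CommRing R] [IsDomain R] [IsIntegrallyClosed R]
    (m : Ideal R) [m.IsPrime] : IsIntegrallyClosed (Localization.AtPrime m) := by
  set S := Localization.AtPrime m
  set K := FractionRing R
  rw [isIntegrallyClosed_iff K]
  intro x hx
  obtain ⟨t, ht⟩ := hx.exists_multiple_integral_of_isLocalization (M := m.primeCompl)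
  obtain ⟨y, hy⟩ := IsIntegrallyClosed.isIntegral_iff.mp ht
  refine ⟨IsLocalization.mk' S y t, ?_⟩
  have htne : algebraMap R K (t : R) ≠ 0 := by
    have : (t : R) ≠ 0 := fun h0 => by
      have := t.2
      rw [h0] at this
      exact this m.zero_mem
    exact fun h0 => this (IsFractionRing.injective R K (by simpa using h0))
  apply mul_right_cancel₀ htne
  have h1 : algebraMap S K (IsLocalization.mk' S y t) * algebraMap S K (algebraMap R S (t : R))
      = algebraMap S K (algebraMap R S y) := by
    rw [← map_mul, IsLocalization.mk'_spec]
  rw [← IsScalarTower.algebraMap_apply R S K, ← IsScalarTower.algebraMap_apply R S K] at h1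
  rw [h1]
  rw [Submonoid.smul_def, Algebra.smul_def] at hy
  rw [hy, mul_comm]

/-- Substitute for Krull's Hauptidealsatz: in a Noetherian integrally closed domain, a prime
minimal over a nonzero principal ideal has height one. -/
lemma aux_height_le_one {R : Type*} [CommRing R] [IsDomain R] [IsIntegrallyClosed R]
    [IsNoetherianRing R] {a : R} (ha : a ≠ 0) {m : Ideal R}
    (hm : m ∈ (Ideal.span {a}).minimalPrimes) {p : Ideal R} (hp : p.IsPrime) (hpm : p < m) :
    p = ⊥ := by
  classical
  haveI hmp : m.IsPrime := hm.1.1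
  have ham : a ∈ m := hm.1.2 (Ideal.subset_span rfl)
  set S := Localization.AtPrime m
  haveI : IsNoetherianRing S :=
    IsLocalization.isNoetherianRing m.primeCompl S inferInstance
  haveI : IsIntegrallyClosed S := aux_IC_atPrime m
  have hinjS : Function.Injective (algebraMap R S) :=
    IsLocalization.injective S m.primeCompl_le_nonZeroDivisors
  set a' : S := algebraMap R S a with ha'
  have ha'0 : a' ≠ 0 := fun h0 => ha (by
    apply hinjS
    rw [← ha', h0, map_zero])
  have hmax : Ideal.map (algebraMap R S) m = IsLocalRing.maximalIdeal S :=
    Localization.AtPrime.map_eq_maximalIdeal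
  have ha'm : a' ∈ IsLocalRing.maximalIdeal S := by
    rw [← hmax]; exact Ideal.mem_map_of_mem _ ham
  -- every prime of S containing a' is the maximal ideal
  have hkey : ∀ P : Ideal S, P.IsPrime → a' ∈ P → P = IsLocalRing.maximalIdeal S := by
    intro P hP ha'P
    have hP0 : P.comap (algebraMap R S) ≤ m := by
      have h1 : P ≤ IsLocalRing.maximalIdeal S := IsLocalRing.le_maximalIdeal hP.ne_top
      have h2 := Ideal.comap_mono (f := algebraMap R S) h1
      rwa [← Ideal.under_def, ← Ideal.under_def, Localization.AtPrime.comap_maximalIdeal] at h2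
    have hP1 : Ideal.span {a} ≤ P.comap (algebraMap R S) := by
      rw [Ideal.span_le, Set.singleton_subset_iff]
      exact ha'P
    have := hm.2 ⟨hP.comap _, hP1⟩ hP0
    have hPm : P.comap (algebraMap R S) = m := le_antisymm hP0 this
    rw [← IsLocalization.map_comap m.primeCompl S P, Ideal.under_def, hPm, hmax]
  have hrad : (Ideal.span {a'}).radical = IsLocalRing.maximalIdeal S := by
    apply le_antisymm
    · rw [Ideal.IsPrime.radical_le_iff inferInstance, Ideal.span_le,
        Set.singleton_subset_iff]
      exact ha'm
    · rw [Ideal.radical_eq_sInf]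
      refine le_sInf fun J hJ => ?_
      rw [hkey J hJ.2 (hJ.1 (Ideal.subset_span rfl))]
  -- the maximal ideal of `S` is principal (adapting `maximalIdeal_isPrincipal_of_isDedekindDomain`)
  have hprinc : (IsLocalRing.maximalIdeal S).IsPrincipal := by
    have hle : Ideal.span {a'} ≤ IsLocalRing.maximalIdeal S := by
      rw [Ideal.span_le, Set.singleton_subset_iff]; exact ha'm
    have hex : ∃ n : ℕ, IsLocalRing.maximalIdeal S ^ n ≤ Ideal.span {a'} := by
      rw [← hrad]
      apply Ideal.exists_radical_pow_le_of_fg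
      exact IsNoetherian.noetherian _
    cases' hn : Nat.find hex with n
    · have hsp := Nat.find_spec hex
      rw [hn, pow_zero, Ideal.one_eq_top] at hsp
      exact absurd (top_le_iff.mp (hsp.trans hle))
        (IsLocalRing.maximalIdeal.isMaximal S).ne_top
    obtain ⟨b, hb₁, hb₂⟩ : ∃ b ∈ IsLocalRing.maximalIdeal S ^ n, b ∉ Ideal.span {a'} := by
      by_contra! h'
      rw [Nat.find_eq_iff] at hn
      exact hn.2 n n.lt_succ_self fun x hx => h' x hx
    have hb₃ : ∀ w ∈ IsLocalRing.maximalIdeal S, ∃ k : S, k * a' = b * w := by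
      intro w hw
      rw [← Ideal.mem_span_singleton']
      apply Nat.find_spec hex
      rw [hn, pow_succ]
      exact Ideal.mul_mem_mul hb₁ hw
    have hb₄ : b ≠ 0 := by rintro rfl; exact hb₂ (zero_mem _)
    obtain ⟨F, _, _, _⟩ : ∃ (F : Type _) (_ : Field F) (_ : Algebra S F), IsFractionRing S F :=
      ⟨FractionRing S, inferInstance, _, Localization.isLocalization⟩
    let x : F := algebraMap S F b / algebraMap S F a'
    let M := Submodule.map (Algebra.linearMap S F) (IsLocalRing.maximalIdeal S)
    have ha₃ : algebraMap S F a' ≠ 0 := IsFractionRing.to_map_eq_zero_iff.not.mpr ha'0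
    by_cases hx : ∀ y ∈ M, x * y ∈ M
    · have hint := isIntegral_of_smul_mem_submodule M ?_ ?_ x hx
      · obtain ⟨y, e⟩ := IsIntegrallyClosed.algebraMap_eq_of_integral hint
        refine (hb₂ (Ideal.mem_span_singleton'.mpr ⟨y, ?_⟩)).elim
        apply IsFractionRing.injective S F
        rw [map_mul, e, div_mul_cancel₀ _ ha₃]
      · rw [Submodule.ne_bot_iff]
        refine ⟨_, ⟨a', ha'm, rfl⟩, ?_⟩
        exact (IsFractionRing.to_map_eq_zero_iff (K := F)).not.mpr ha'0
      · apply Submodule.FG.map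
        exact IsNoetherian.noetherian _
    · have htop :
          (M.map (DistribMulAction.toLinearMap S F x)).comap (Algebra.linearMap S F) = ⊤ := by
        by_contra h
        apply hx
        rintro m' ⟨w, hw, rfl : algebraMap S F w = m'⟩
        obtain ⟨k, hk⟩ := hb₃ w hw
        have hk' : x * algebraMap S F w = algebraMap S F k := by
          rw [← mul_div_right_comm, ← map_mul, ← hk, map_mul, mul_div_cancel_right₀ _ ha₃]
        exact ⟨k, IsLocalRing.le_maximalIdeal h ⟨_, ⟨_, hw, rfl⟩, hk'⟩, hk'.symm⟩
      obtain ⟨y, hy₁, hy₂⟩ : ∃ y ∈ IsLocalRing.maximalIdeal S, b * y = a' := by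
        rw [Ideal.eq_top_iff_one, Submodule.mem_comap] at htop
        obtain ⟨_, ⟨y, hy, rfl⟩, hy' : x * algebraMap S F y = algebraMap S F 1⟩ := htop
        rw [map_one, ← mul_div_right_comm, div_eq_one_iff_eq ha₃, ← map_mul] at hy'
        exact ⟨y, hy, IsFractionRing.injective S F hy'⟩
      refine ⟨⟨y, ?_⟩⟩
      apply le_antisymm
      · intro w hw
        obtain ⟨k, hk⟩ := hb₃ w hw
        rw [← hy₂, mul_comm, mul_assoc] at hk
        rw [← mul_left_cancel₀ hb₄ hk, mul_comm]
        exact Ideal.mem_span_singleton'.mpr ⟨_, rfl⟩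
      · rwa [Submodule.span_le, Set.singleton_subset_iff]
  -- apply the TFAE for noetherian local domains
  have h43 := (tfae_of_isNoetherianRing_of_isLocalRing_of_isDomain S).out 4 3
  obtain ⟨-, hallprime⟩ := h43.mp hprinc
  by_contra hpne
  have hdisj : Disjoint (m.primeCompl : Set R) (p : Set R) :=
    Set.disjoint_left.mpr fun z hz hzp => hz (hpm.le hzp)
  have hPprime : (p.map (algebraMap R S)).IsPrime :=
    IsLocalization.isPrime_of_isPrime_disjoint m.primeCompl S p hp hdisj
  have hPne : p.map (algebraMap R S) ≠ ⊥ := by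
    obtain ⟨z, hzp, hz0⟩ := (Submodule.ne_bot_iff _).mp hpne
    rw [Submodule.ne_bot_iff]
    exact ⟨algebraMap R S z, Ideal.mem_map_of_mem _ hzp,
      fun h0 => hz0 (hinjS (by rw [h0, map_zero]))⟩
  have hPmax := hallprime _ hPne hPprime
  have hcomap : (p.map (algebraMap R S)).comap (algebraMap R S) = p :=
    IsLocalization.comap_map_of_isPrime_disjoint m.primeCompl S hp hdisj
  rw [hPmax, ← Ideal.under_def, Localization.AtPrime.comap_maximalIdeal] at hcomap
  exact hpm.ne hcomap.symm

/-- **Proposition (generic-map (1)).** Let `A → B` be an injective integral homomorphism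
of normal domains with `A` Noetherian, and `π` a nonzero element of `A`.  Suppose `B` is
the union of a directed system of Noetherian normal `A`-subalgebras.  Then the minimal
primes over `πB` are exactly the height-1 prime ideals of `B` containing `π`. -/
theorem minimalPrimes_span_eq_height_one_primes
    {A B : Type*} [CommRing A] [IsDomain A] [IsIntegrallyClosed A] [IsNoetherianRing A]
    [CommRing B] [IsDomain B] [IsIntegrallyClosed B] [Algebra A B]
    (hinj : Function.Injective (algebraMap A B)) [Algebra.IsIntegral A B]
    {ι : Type*} [Preorder ι] [IsDirected ι (· ≤ ·)] [Nonempty ι]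
    (Bf : ι → Subalgebra A B) (hmono : Monotone Bf)
    (hNoeth : ∀ i, IsNoetherianRing (Bf i))
    (hNormal : ∀ i, IsIntegrallyClosed (Bf i))
    (hUnion : ∀ b : B, ∃ i, b ∈ Bf i)
    (π : A) (hπ : π ≠ 0) :
    (Ideal.span {algebraMap A B π}).minimalPrimes =
      {q : Ideal B | q.IsPrime ∧ algebraMap A B π ∈ q ∧ q ≠ ⊥ ∧
        ∀ p : Ideal B, p.IsPrime → p < q → p = ⊥} := by
  have hπB : algebraMap A B π ≠ 0 := fun h0 => hπ (hinj (by rw [h0, map_zero]))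
  ext q
  simp only [Set.mem_setOf_eq]
  constructor
  · intro hq
    have hqp : q.IsPrime := hq.1.1
    have hπq : algebraMap A B π ∈ q := hq.1.2 (Ideal.subset_span rfl)
    refine ⟨hqp, hπq, ?_, ?_⟩
    · rintro rfl
      exact hπB (by simpa using hπq)
    · intro p hp hpq
      by_contra hpne
      obtain ⟨x, hxp, hx0⟩ := (Submodule.ne_bot_iff _).mp hpne
      obtain ⟨y, hyq, hynp⟩ := SetLike.exists_of_lt hpq
      obtain ⟨i₁, hxi⟩ := hUnion x
      obtain ⟨i₂, hyi⟩ := hUnion y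
      obtain ⟨i, hi1, hi2⟩ := directed_of (· ≤ ·) i₁ i₂
      have hx' : x ∈ Bf i := hmono hi1 hxi
      have hy' : y ∈ Bf i := hmono hi2 hyi
      haveI := hNoeth i
      haveI := hNormal i
      have hRinj : Function.Injective (algebraMap (Bf i) B) := Subtype.val_injective
      haveI : Algebra.IsIntegral (Bf i) B :=
        ⟨fun b => IsIntegral.tower_top (Algebra.IsIntegral.isIntegral (R := A) b)⟩
      set π₀ : Bf i := ⟨algebraMap A B π, (Bf i).algebraMap_mem π⟩ with hπ₀def
      have hπ₀0 : π₀ ≠ 0 := fun h0 => hπB (congrArg Subtype.val h0)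
      set qR := q.comap (algebraMap (Bf i) B) with hqR
      set pR := p.comap (algebraMap (Bf i) B) with hpR
      haveI hqRp : qR.IsPrime := hqp.comap _
      haveI hpRp : pR.IsPrime := hp.comap _
      have hπ₀q : π₀ ∈ qR := by
        rw [hqR, Ideal.mem_comap]
        exact hπq
      obtain ⟨r, hrmin, hrle⟩ := Ideal.exists_minimalPrimes_le
        (show Ideal.span {π₀} ≤ qR from by
          rw [Ideal.span_le, Set.singleton_subset_iff]; exact hπ₀q)
      rcases eq_or_lt_of_le hrle with rfl | hrlt
      · -- the contraction of `q` is minimal over `π₀`: use the height-one lemma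
        have hpRlt : pR < qR := by
          refine lt_of_le_of_ne (Ideal.comap_mono hpq.le) (fun h => ?_)
          have : (⟨y, hy'⟩ : Bf i) ∈ pR := by
            rw [h, hqR, Ideal.mem_comap]
            exact hyq
          exact hynp this
        have hbot := aux_height_le_one hπ₀0 hrmin hpRp hpRlt
        have : (⟨x, hx'⟩ : Bf i) ∈ pR := by
          rw [hpR, Ideal.mem_comap]
          exact hxp
        rw [hbot] at this
        exact hx0 (congrArg Subtype.val (by simpa using this))
      · -- otherwise use going-down to contradict minimality of `q`
        obtain ⟨P, hPprime, hPle, hPcomap⟩ :=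
          aux_going_down hRinj hrmin.1.1 hqp hrlt.le
        have hπP : algebraMap A B π ∈ P := by
          have : π₀ ∈ P.comap (algebraMap (Bf i) B) := by
            rw [hPcomap]
            exact hrmin.1.2 (Ideal.subset_span rfl)
          exact this
        have hspanP : Ideal.span {algebraMap A B π} ≤ P := by
          rw [Ideal.span_le, Set.singleton_subset_iff]; exact hπP
        have hqleP : q ≤ P := hq.2 ⟨hPprime, hspanP⟩ hPle
        have hPq : P = q := le_antisymm hPle hqleP
        rw [hPq] at hPcomap
        exact hrlt.ne (hPcomap.symm)
  · rintro ⟨hqp, hπq, hqne, hht⟩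
    constructor
    · exact ⟨hqp, by rwa [Ideal.span_le, Set.singleton_subset_iff]⟩
    · rintro p ⟨hpprime, hple⟩ hpq
      rcases eq_or_lt_of_le hpq with rfl | hlt
      · exact le_refl _
      · exfalso
        have hbot := hht p hpprime hlt
        have : algebraMap A B π ∈ p := hple (Ideal.subset_span rfl)
        rw [hbot] at this
        exact hπB (by simpa using this)
end

section
/- Let R be a ring, M an R-module, d ≥ 1, g_1,…,g_d ∈ R with g_i = a_i g_1, and g ∈ R with g = a·g_1 such that multiplication by g on M is injective. For the short exact sequence 0 → K•(M/gM; g_•) →(·g) K•(M/g²M; g_•) → K•(M/gM; g_•) → 0 of Koszul complexes, the resulting long sequence of cohomology groups H^{n−1}(K•(M/gM; g_•)) → H^n(K•(M/gM; g_•)) → H^{n+1}(K•(M/gM; g_•)) formed by the coboundary maps δ^n is exact. -/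
open Finset

/-- The degree-`n` term of the Koszul complex `K•(M; g₁, …, g_d)` in coordinates. -/
abbrev KoszulTerm (R : Type*) (M : Type*) [AddCommGroup M] (d n : ℕ) : Type _ :=
  {s : Finset (Fin d) // s.card = n} → M

/-- The Koszul differential `dⁿ(x) = Σ_k (g_k ⊗ e_k) ∧ x` in coordinates. -/
noncomputable def koszulDiff (R : Type*) [CommRing R] (M : Type*) [AddCommGroup M]
    [Module R M] (d : ℕ) (g : Fin d → R) (n : ℕ) :
    KoszulTerm R M d n →ₗ[R] KoszulTerm R M d (n + 1) :=
  LinearMap.pi fun s =>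
    ∑ k ∈ s.1.attach,
      (((-1 : R) ^ ((s.1.filter (fun j => j < (k : Fin d))).card)) * g k) •
        (LinearMap.proj
          (⟨s.1.erase (k : Fin d), by
            rw [Finset.card_erase_of_mem k.2, s.2]; omega⟩ :
              {t : Finset (Fin d) // t.card = n}) :
          KoszulTerm R M d n →ₗ[R] M)

/-- A linear map applied componentwise on Koszul terms. -/
noncomputable def koszulMap {R : Type*} [CommRing R] {M N : Type*} [AddCommGroup M]
    [Module R M] [AddCommGroup N] [Module R N] (f : M →ₗ[R] N) (d n : ℕ) :
    KoszulTerm R M d n →ₗ[R] KoszulTerm R N d n :=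
  LinearMap.pi fun s => f.comp (LinearMap.proj s)

/-- `M / gM`. -/
abbrev ModG (R : Type*) [CommRing R] (M : Type*) [AddCommGroup M] [Module R M] (g : R) :
    Type _ :=
  M ⧸ LinearMap.range (LinearMap.lsmul R M g)

/-- The reduction map `M/g²M → M/gM`. -/
noncomputable def redG (R : Type*) [CommRing R] (M : Type*) [AddCommGroup M] [Module R M]
    (g : R) : ModG R M (g * g) →ₗ[R] ModG R M g :=
  Submodule.mapQ _ _ LinearMap.id (by
    rintro x ⟨m, rfl⟩
    exact ⟨g • m, by simp [LinearMap.lsmul_apply, smul_smul]⟩)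

/-- The map `M/gM → M/g²M` given by multiplication by `g`. -/
noncomputable def mulG (R : Type*) [CommRing R] (M : Type*) [AddCommGroup M] [Module R M]
    (g : R) : ModG R M g →ₗ[R] ModG R M (g * g) :=
  Submodule.mapQ _ _ (LinearMap.lsmul R M g) (by
    rintro x ⟨m, rfl⟩
    exact ⟨m, by simp [LinearMap.lsmul_apply, smul_smul]⟩)

section Aux

variable {R : Type*} [CommRing R] {M : Type*} [AddCommGroup M] [Module R M]
variable {d : ℕ} (g : Fin d → R)

/-- Evaluation of a Koszul term at a finset, or `0` if the cardinality is wrong. -/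
noncomputable def Eval {m : ℕ} (x : KoszulTerm R M d m) (s : Finset (Fin d)) : M :=
  if h : s.card = m then x ⟨s, h⟩ else 0

/-- The Koszul sign coefficient. -/
noncomputable def Coef (s : Finset (Fin d)) (k : Fin d) : R :=
  ((-1 : R) ^ ((s.filter (fun j => j < k)).card)) * g k

lemma koszulMap_apply {N : Type*} [AddCommGroup N] [Module R N] (f : M →ₗ[R] N) {n : ℕ}
    (x : KoszulTerm R M d n) (s : {s : Finset (Fin d) // s.card = n}) :
    koszulMap f d n x s = f (x s) := rfl

lemma koszulDiff_apply {n : ℕ} (x : KoszulTerm R M d n)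
    (s : {s : Finset (Fin d) // s.card = n + 1}) :
    koszulDiff R M d g n x s = ∑ k ∈ s.1, Coef g s.1 k • Eval x (s.1.erase k) := by
  rw [← Finset.sum_attach s.1 (fun k => Coef g s.1 k • Eval x (s.1.erase k))]
  show (LinearMap.pi _) x s = _
  rw [LinearMap.pi_apply, LinearMap.sum_apply]
  refine Finset.sum_congr rfl fun k _ => ?_
  rw [LinearMap.smul_apply, LinearMap.proj_apply]
  unfold Eval Coef
  rw [dif_pos]

lemma coef_sign (s : Finset (Fin d)) (k l : Fin d) (hk : k ∈ s) (hl : l ∈ s) (hkl : k ≠ l) :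
    Coef g s k * Coef g (s.erase k) l = -(Coef g s l * Coef g (s.erase l) k) := by
  unfold Coef
  rw [Finset.filter_erase, Finset.filter_erase]
  rcases hkl.lt_or_gt with h | h
  · rw [Finset.erase_eq_of_notMem (s := Finset.filter (fun j => j < k) s) (a := l)
        (fun hm => absurd ((Finset.mem_filter.mp hm).2) h.asymm),
      ← Finset.card_erase_add_one ((Finset.mem_filter (s := s) (p := fun j => j < l)).mpr ⟨hk, h⟩),
      pow_succ]
    ring
  · rw [Finset.erase_eq_of_notMem (s := Finset.filter (fun j => j < l) s) (a := k)
        (fun hm => absurd ((Finset.mem_filter.mp hm).2) h.asymm),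
      ← Finset.card_erase_add_one ((Finset.mem_filter (s := s) (p := fun j => j < k)).mpr ⟨hl, h⟩),
      pow_succ]
    ring

lemma Eval_card {n : ℕ} (x : KoszulTerm R M d n) (s : Finset (Fin d)) (h : s.card = n) :
    Eval x s = x ⟨s, h⟩ := dif_pos h

lemma diff_diff {n : ℕ} (x : KoszulTerm R M d n) :
    koszulDiff R M d g (n + 1) (koszulDiff R M d g n x) = 0 := by
  funext s
  obtain ⟨s, hs⟩ := s
  rw [koszulDiff_apply]
  show ∑ k ∈ s, Coef g s k • Eval (koszulDiff R M d g n x) (s.erase k) = (0 : M)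
  have step : ∀ k ∈ s, Coef g s k • Eval (koszulDiff R M d g n x) (s.erase k)
      = ∑ l ∈ s.erase k, (Coef g s k * Coef g (s.erase k) l) • Eval x ((s.erase k).erase l) := by
    intro k hk
    rw [Eval_card _ _ (by rw [Finset.card_erase_of_mem hk, hs]; omega),
      koszulDiff_apply, Finset.smul_sum]
    exact Finset.sum_congr rfl fun l _ => by rw [smul_smul]
  rw [Finset.sum_congr rfl step, Finset.sum_sigma']
  refine Finset.sum_involution (fun p _ => ⟨p.2, p.1⟩) ?_ ?_ ?_ ?_
  · rintro ⟨k, l⟩ hp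
    obtain ⟨hk, hl⟩ := Finset.mem_sigma.mp hp
    have hlk : l ≠ k := Finset.ne_of_mem_erase hl
    have hls : l ∈ s := Finset.mem_of_mem_erase hl
    show _ + (Coef g s l * Coef g (s.erase l) k) • Eval x ((s.erase l).erase k) = 0
    rw [Finset.erase_right_comm (s := s), coef_sign g s k l hk hls (Ne.symm hlk), neg_smul,
      neg_add_cancel]
  · rintro ⟨k, l⟩ hp _
    intro hcontra
    exact Finset.ne_of_mem_erase (Finset.mem_sigma.mp hp).2 (congrArg Sigma.fst hcontra)
  · rintro ⟨k, l⟩ hp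
    obtain ⟨hk, hl⟩ := Finset.mem_sigma.mp hp
    exact Finset.mem_sigma.mpr ⟨Finset.mem_of_mem_erase hl,
      Finset.mem_erase.mpr ⟨(Finset.ne_of_mem_erase hl).symm, hk⟩⟩
  · rintro ⟨k, l⟩ hp
    rfl


variable (z : Fin d)

/-- Contraction against the first basis vector. -/
noncomputable def sig {n : ℕ} (x : KoszulTerm R M d (n + 1)) : KoszulTerm R M d n :=
  fun t => if z ∈ t.1 then 0 else Eval x (insert z t.1)

lemma sig_smul (c : R) {n : ℕ} (x : KoszulTerm R M d (n + 1)) :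
    sig z (c • x) = c • sig z x := by
  funext t
  show (if z ∈ t.1 then 0 else Eval (c • x) (insert z t.1))
    = c • (if z ∈ t.1 then 0 else Eval x (insert z t.1))
  unfold Eval
  split_ifs <;> simp

lemma coef_self (s : Finset (Fin d)) (hz : ∀ k, z ≤ k) : Coef g s z = g z := by
  unfold Coef
  rw [Finset.filter_false_of_mem (fun j _ => not_lt.mpr (hz j)), Finset.card_empty,
    pow_zero, one_mul]

lemma homotopy (hz : ∀ k, z ≤ k) {n : ℕ} (x : KoszulTerm R M d (n + 1)) :
    koszulDiff R M d g n (sig z x) + sig z (koszulDiff R M d g (n + 1) x) = g z • x := by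
  funext t
  obtain ⟨s, hs⟩ := t
  show koszulDiff R M d g n (sig z x) ⟨s, hs⟩
      + sig z (koszulDiff R M d g (n + 1) x) ⟨s, hs⟩ = g z • x ⟨s, hs⟩
  rw [koszulDiff_apply]
  by_cases hzs : z ∈ s
  · have h2 : sig z (koszulDiff R M d g (n + 1) x) ⟨s, hs⟩ = 0 := if_pos hzs
    rw [h2, add_zero, Finset.sum_eq_single_of_mem z hzs ?side]
    case side =>
      intro k hk hkz
      rw [Eval_card _ _ (by rw [Finset.card_erase_of_mem hk, hs]; omega)]
      show Coef g s k • (if z ∈ s.erase k then 0 else Eval x (insert z (s.erase k))) = 0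
      rw [if_pos (Finset.mem_erase.mpr ⟨Ne.symm hkz, hzs⟩), smul_zero]
    rw [coef_self g z s hz, Eval_card _ _ (by rw [Finset.card_erase_of_mem hzs, hs]; omega)]
    show g z • (if z ∈ s.erase z then 0 else Eval x (insert z (s.erase z))) = _
    rw [if_neg (Finset.notMem_erase z s), Finset.insert_erase hzs, Eval_card _ _ hs]
  · have h2 : sig z (koszulDiff R M d g (n + 1) x) ⟨s, hs⟩
        = Eval (koszulDiff R M d g (n + 1) x) (insert z s) := if_neg hzs
    have hins : (insert z s).card = n + 1 + 1 := by
      rw [Finset.card_insert_of_notMem hzs, hs]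
    rw [h2, Eval_card _ _ hins, koszulDiff_apply]
    show _ + ∑ k ∈ insert z s, Coef g (insert z s) k • Eval x ((insert z s).erase k) = _
    rw [Finset.sum_insert hzs]
    have key : ∀ k ∈ s, Coef g (insert z s) k • Eval x ((insert z s).erase k)
        = -(Coef g s k • Eval (sig z x) (s.erase k)) := by
      intro k hk
      have hzk : z < k := lt_of_le_of_ne (hz k) (fun h => hzs (h ▸ hk))
      have e1 : (insert z s).erase k = insert z (s.erase k) :=
        Finset.erase_insert_of_ne (fun h => hzs (h ▸ hk))
      have e2 : Coef g (insert z s) k = -Coef g s k := by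
        unfold Coef
        rw [Finset.filter_insert, if_pos hzk,
          Finset.card_insert_of_notMem (fun hm => hzs (Finset.mem_of_mem_filter _ hm)),
          pow_succ]
        ring
      have e3 : Eval (sig z x) (s.erase k) = Eval x (insert z (s.erase k)) := by
        rw [Eval_card _ _ (by rw [Finset.card_erase_of_mem hk, hs]; omega)]
        show (if z ∈ s.erase k then 0 else Eval x (insert z (s.erase k))) = _
        rw [if_neg (fun hm => hzs (Finset.mem_of_mem_erase hm))]
      rw [e1, e2, e3, neg_smul]
    rw [Finset.sum_congr rfl key, coef_self g z (insert z s) hz, Finset.erase_insert hzs,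
      Eval_card _ _ hs, Finset.sum_neg_distrib]
    abel

lemma homotopy_zero (hz : ∀ k, z ≤ k) (x : KoszulTerm R M d 0) :
    sig z (koszulDiff R M d g 0 x) = g z • x := by
  funext t
  obtain ⟨s, hs⟩ := t
  have hse : s = ∅ := Finset.card_eq_zero.mp hs
  subst hse
  show (if z ∈ (∅ : Finset (Fin d)) then 0 else Eval (koszulDiff R M d g 0 x) (insert z ∅))
      = g z • x ⟨∅, hs⟩
  rw [if_neg (Finset.notMem_empty z), Eval_card _ _ (by simp), koszulDiff_apply]
  show ∑ k ∈ insert z (∅ : Finset (Fin d)),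
      Coef g (insert z (∅ : Finset (Fin d))) k • Eval x ((insert z (∅ : Finset (Fin d))).erase k) = _
  rw [Finset.sum_insert (Finset.notMem_empty z), Finset.sum_empty, add_zero,
    coef_self g z _ hz, Finset.erase_insert (Finset.notMem_empty z),
    Eval_card _ _ Finset.card_empty]

lemma koszulMap_koszulDiff {N : Type*} [AddCommGroup N] [Module R N] (f : M →ₗ[R] N) {n : ℕ}
    (x : KoszulTerm R M d n) :
    koszulMap f d (n + 1) (koszulDiff R M d g n x) = koszulDiff R N d g n (koszulMap f d n x) := by
  funext s
  rw [koszulMap_apply, koszulDiff_apply, koszulDiff_apply, map_sum]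
  refine Finset.sum_congr rfl fun k _ => ?_
  rw [map_smul]
  congr 1
  unfold Eval
  split_ifs with h
  · rfl
  · exact map_zero f

end Aux

section Quot

variable {R : Type*} [CommRing R] {M : Type*} [AddCommGroup M] [Module R M]
variable {d : ℕ} (g : Fin d → R)

/-- Componentwise reduction mod `c`. -/
noncomputable def mkK (c : R) (d n : ℕ) :
    KoszulTerm R M d n →ₗ[R] KoszulTerm R (ModG R M c) d n :=
  koszulMap (Submodule.mkQ _) d n

lemma mkK_surjective (c : R) {n : ℕ} (x : KoszulTerm R (ModG R M c) d n) :
    ∃ y : KoszulTerm R M d n, mkK c d n y = x := by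
  choose y hy using fun s => Submodule.Quotient.mk_surjective _ (x s)
  exact ⟨y, funext hy⟩

lemma mkK_eq_iff (c : R) {n : ℕ} (x x' : KoszulTerm R M d n) :
    mkK c d n x = mkK c d n x' ↔ ∃ t, x' = x + c • t := by
  constructor
  · intro h
    have h' : ∀ s, ∃ m, x' s = x s + c • m := by
      intro s
      have h2 : Submodule.Quotient.mk (p := LinearMap.range (LinearMap.lsmul R M c)) (x s)
          = Submodule.Quotient.mk (x' s) := congrFun h s
      rw [Submodule.Quotient.eq] at h2
      obtain ⟨m, hm⟩ := h2
      refine ⟨-m, ?_⟩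
      have : c • m = x s - x' s := hm
      rw [smul_neg, this]
      abel
    choose t ht using h'
    exact ⟨t, funext ht⟩
  · rintro ⟨t, rfl⟩
    funext s
    show Submodule.Quotient.mk (x s) = Submodule.Quotient.mk ((x + c • t) s)
    rw [Submodule.Quotient.eq]
    exact ⟨-t s, by show c • (-t s) = x s - (x s + c • t s); rw [smul_neg]; abel⟩

lemma mkK_smul_eq_zero (c : R) {n : ℕ} (q : KoszulTerm R M d n) :
    mkK c d n (c • q) = 0 := by
  funext s
  show Submodule.Quotient.mk (c • q s) = 0
  exact (Submodule.Quotient.mk_eq_zero _).mpr ⟨q s, rfl⟩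

lemma mulK (c : R) {n : ℕ} (x : KoszulTerm R M d n) :
    koszulMap (mulG R M c) d n (mkK c d n x) = mkK (c * c) d n (c • x) := by
  funext s
  show mulG R M c (Submodule.Quotient.mk (x s)) = Submodule.Quotient.mk (c • x s)
  rw [mulG, Submodule.mapQ_apply, LinearMap.lsmul_apply]

lemma redK (c : R) {n : ℕ} (x : KoszulTerm R M d n) :
    koszulMap (redG R M c) d n (mkK (c * c) d n x) = mkK c d n x := by
  funext s
  show redG R M c (Submodule.Quotient.mk (x s)) = Submodule.Quotient.mk (x s)
  rw [redG, Submodule.mapQ_apply, LinearMap.id_apply]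

lemma diff_mkK (c : R) {n : ℕ} (x : KoszulTerm R M d n) :
    koszulDiff R (ModG R M c) d g n (mkK c d n x) = mkK c d (n + 1) (koszulDiff R M d g n x) :=
  (koszulMap_koszulDiff g (Submodule.mkQ _) x).symm

end Quot

/-- **Corollary (koszul coboundary).** Let `R` be a ring, `M` an `R`-module, `d ≥ 1`,
`g₁, …, g_d ∈ R` with `g_i = a_i g₁`, and `g = a g₁ ∈ R` acting injectively on `M`.
For the short exact sequence
`0 → K•(M/gM; g_•) →(·g) K•(M/g²M; g_•) → K•(M/gM; g_•) → 0`
the long sequence of cohomology groups formed by the coboundary maps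
`δⁿ : Hⁿ(K•(M/gM)) → H^{n+1}(K•(M/gM))` is exact.

This is expressed on representatives: a class in `H^{n+1}(K•(M/gM))` is written as
`[π x]` for a lift `x : Kⁿ⁺¹(M/g²M)` whose differential is `g·y` (i.e. `ι y = d x`, so
`δ[π x] = [y]`); exactness at `H^{n+1}` says that `[y] = 0` iff `[π x]` lies in the image
of `δⁿ`, and exactness at `H⁰` says that `δ⁰` is injective. -/
theorem koszul_coboundary_sequence_exact {R : Type*} [CommRing R] {M : Type*}
    [AddCommGroup M] [Module R M] (d : ℕ) (hd : 0 < d) (g a : Fin d → R)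
    (ha : a ⟨0, hd⟩ = 1) (hg : ∀ i, g i = a i * g ⟨0, hd⟩)
    (gg aa : R) (hgg : gg = aa * g ⟨0, hd⟩)
    (hinj : Function.Injective fun m : M => gg • m) :
    (∀ (n : ℕ) (x : KoszulTerm R (ModG R M (gg * gg)) d (n + 1))
        (y : KoszulTerm R (ModG R M gg) d (n + 2)),
      koszulMap (mulG R M gg) d (n + 2) y = koszulDiff R (ModG R M (gg * gg)) d g (n + 1) x →
        ((∃ z : KoszulTerm R (ModG R M gg) d (n + 1),
            y = koszulDiff R (ModG R M gg) d g (n + 1) z) ↔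
          ∃ (w : KoszulTerm R (ModG R M (gg * gg)) d n)
            (v : KoszulTerm R (ModG R M gg) d (n + 1))
            (u : KoszulTerm R (ModG R M gg) d n),
            koszulMap (mulG R M gg) d (n + 1) v = koszulDiff R (ModG R M (gg * gg)) d g n w ∧
            koszulMap (redG R M gg) d (n + 1) x = v + koszulDiff R (ModG R M gg) d g n u)) ∧
    (∀ (x : KoszulTerm R (ModG R M (gg * gg)) d 0)
        (y : KoszulTerm R (ModG R M gg) d 1),
      koszulMap (mulG R M gg) d 1 y = koszulDiff R (ModG R M (gg * gg)) d g 0 x →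
        (∃ z : KoszulTerm R (ModG R M gg) d 0, y = koszulDiff R (ModG R M gg) d g 0 z) →
        koszulMap (redG R M gg) d 0 x = 0) := by
  have hz : ∀ k : Fin d, (⟨0, hd⟩ : Fin d) ≤ k := fun k => by
    rw [Fin.le_def]; exact Nat.zero_le _
  set z : Fin d := ⟨0, hd⟩
  have hinjK : ∀ {n : ℕ} (A B : KoszulTerm R M d n), gg • A = gg • B → A = B := by
    intro n A B h
    funext s
    exact hinj (congrFun h s)
  constructor
  · intro n x y hxy
    obtain ⟨X, rfl⟩ := mkK_surjective (gg * gg) x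
    obtain ⟨Y0, rfl⟩ := mkK_surjective gg y
    rw [mulK, diff_mkK, mkK_eq_iff] at hxy
    obtain ⟨t, ht⟩ := hxy
    have hDX : koszulDiff R M d g (n + 1) X = gg • (Y0 + gg • t) := by
      rw [ht, smul_add, smul_smul]
    set Y : KoszulTerm R M d (n + 2) := Y0 + gg • t with hY
    have hYY0 : mkK gg d (n + 2) Y = mkK gg d (n + 2) Y0 :=
      (mkK_eq_iff gg Y Y0).mpr ⟨-t, by rw [hY]; module⟩
    constructor
    · rintro ⟨zz, hzz⟩
      obtain ⟨Z, rfl⟩ := mkK_surjective gg zz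
      rw [diff_mkK, ← hYY0, mkK_eq_iff] at hzz
      obtain ⟨t2, ht2⟩ := hzz
      set P : KoszulTerm R M d (n + 1) := X - gg • Z with hP
      have hDP : koszulDiff R M d g (n + 1) P = (-(gg * gg)) • t2 := by
        rw [hP, map_sub, map_smul, hDX, ht2]
        module
      have hh := homotopy g z hz P
      rw [hDP, sig_smul] at hh
      have hW : koszulDiff R M d g n (aa • sig z P)
          = gg • P + (gg * gg) • (aa • sig z t2) := by
        rw [map_smul]
        have h1 : koszulDiff R M d g n (sig z P) = g z • P + (gg * gg) • sig z t2 := by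
          rw [← hh]; module
        rw [h1, hgg]
        module
      refine ⟨mkK (gg * gg) d n (aa • sig z P), mkK gg d (n + 1) P, 0, ?_, ?_⟩
      · rw [mulK, diff_mkK]
        exact (mkK_eq_iff (gg * gg) _ _).mpr ⟨aa • sig z t2, by rw [hW]⟩
      · rw [map_zero, add_zero, redK]
        exact (mkK_eq_iff gg _ _).mpr ⟨-Z, by rw [hP]; module⟩
    · rintro ⟨w, v, u, hvw, hxvu⟩
      obtain ⟨W, rfl⟩ := mkK_surjective (gg * gg) w
      obtain ⟨V, rfl⟩ := mkK_surjective gg v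
      obtain ⟨U, rfl⟩ := mkK_surjective gg u
      rw [mulK, diff_mkK, mkK_eq_iff] at hvw
      obtain ⟨r1, hr1⟩ := hvw
      rw [redK, diff_mkK, ← map_add, mkK_eq_iff] at hxvu
      obtain ⟨r2, hr2⟩ := hxvu
      have hDV : koszulDiff R M d g (n + 1) V
          = gg • (Y + koszulDiff R M d g (n + 1) r2) := by
        have hV : V = X + gg • r2 - koszulDiff R M d g n U := by rw [← hr2]; abel
        rw [hV, map_sub, map_add, map_smul, diff_diff, hDX]
        module
      have h0 := congrArg (koszulDiff R M d g (n + 1)) hr1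
      rw [diff_diff, map_add, map_smul, map_smul, hDV] at h0
      have h1 : gg • (gg • ((0 : KoszulTerm R M d (n + 2))))
          = gg • (gg • (Y + koszulDiff R M d g (n + 1) r2
              + koszulDiff R M d g (n + 1) r1)) := by
        simp only [smul_zero]; rw [h0]; module
      have h2 := hinjK _ _ (hinjK _ _ h1)
      have hYeq : Y = koszulDiff R M d g (n + 1) (-(r2 + r1)) := by
        rw [map_neg, map_add]
        have := h2.symm
        rw [← sub_eq_zero] at this ⊢
        rw [← this]; abel
      refine ⟨mkK gg d (n + 1) (-(r2 + r1)), ?_⟩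
      rw [diff_mkK, ← hYY0]
      exact congrArg _ hYeq
  · intro x y hxy hex
    obtain ⟨X, rfl⟩ := mkK_surjective (gg * gg) x
    obtain ⟨Y0, rfl⟩ := mkK_surjective gg y
    rw [mulK, diff_mkK, mkK_eq_iff] at hxy
    obtain ⟨t, ht⟩ := hxy
    have hDX : koszulDiff R M d g 0 X = gg • (Y0 + gg • t) := by
      rw [ht, smul_add, smul_smul]
    set Y : KoszulTerm R M d 1 := Y0 + gg • t with hY
    have hYY0 : mkK gg d 1 Y = mkK gg d 1 Y0 :=
      (mkK_eq_iff gg Y Y0).mpr ⟨-t, by rw [hY]; module⟩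
    obtain ⟨zz, hzz⟩ := hex
    obtain ⟨Z, rfl⟩ := mkK_surjective gg zz
    rw [diff_mkK, ← hYY0, mkK_eq_iff] at hzz
    obtain ⟨t2, ht2⟩ := hzz
    set P : KoszulTerm R M d 0 := X - gg • Z with hP
    have hDP : koszulDiff R M d g 0 P = (-(gg * gg)) • t2 := by
      rw [hP, map_sub, map_smul, hDX, ht2]
      module
    have hh := homotopy_zero g z hz P
    rw [hDP, sig_smul] at hh
    have hPeq : gg • P = gg • (gg • (-(aa • sig z t2))) := by
      calc gg • P = aa • (g z • P) := by rw [hgg, mul_smul]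
        _ = aa • ((-(gg * gg)) • sig z t2) := by rw [← hh]
        _ = gg • (gg • (-(aa • sig z t2))) := by module
    have hP2 : P = gg • (-(aa • sig z t2)) := hinjK _ _ hPeq
    have hX : X = gg • (Z + -(aa • sig z t2)) := by
      have : X = P + gg • Z := by rw [hP]; abel
      rw [this, hP2]; module
    rw [redK, hX]
    exact mkK_smul_eq_zero gg _
end

section
/- A maximal valuation field is algebraically closed if and only if its residue field is algebraically closed and its value group is divisible. -/
open IsLocalRing

/-- A valuation ring `O` is *maximal* (its fraction field admits no proper immediate
extension): every injective local homomorphism to a valuation ring which induces an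
isomorphism on value groups (every nonzero element of the target is associated to an
element coming from `O`) and on residue fields (every element of the target is congruent
to an element coming from `O` modulo the maximal ideal) is surjective. -/
def IsMaximalValRing (O : Type u) [CommRing O] [IsDomain O] [ValuationRing O] : Prop :=
  ∀ (O' : Type u) [CommRing O'] [IsDomain O'] [ValuationRing O'] (f : O →+* O'),
    Function.Injective f → IsLocalHom f →
    (∀ x : O', ∃ a : O, x - f a ∈ maximalIdeal O') →
    (∀ x : O', x ≠ 0 → ∃ (a : O) (u : O'ˣ), x = f a * u) →
    Function.Surjective f

open Polynomial

universe v

section Helpers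

variable {O : Type u} [CommRing O] [IsDomain O] [ValuationRing O]

theorem MyAux.integers :
    Valuation.Integers (ValuationRing.valuation O (FractionRing O)) O := by
  constructor
  · exact IsFractionRing.injective O (FractionRing O)
  · intro a
    have : algebraMap O (FractionRing O) a ∈ (ValuationRing.valuation O (FractionRing O)).integer :=
      (ValuationRing.mem_integer_iff O _ _).mpr ⟨a, rfl⟩
    exact (Valuation.mem_integer_iff _ _).mp this
  · intro r hr
    exact (ValuationRing.mem_integer_iff O _ _).mp ((Valuation.mem_integer_iff _ _).mpr hr)

theorem MyAux.isIntegrallyClosed : IsIntegrallyClosed O :=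
  (MyAux.integers (O := O)).isIntegrallyClosed

/-- In a zero sum, every nonzero term's valuation is matched-or-exceeded by another term. -/
theorem MyAux.exists_ne_ge_of_sum_eq_zero {R Γ ι : Type*} [CommRing R]
    [LinearOrderedCommGroupWithZero Γ] [DecidableEq ι] (v : Valuation R Γ) {s : Finset ι} {f : ι → R}
    (hsum : ∑ i ∈ s, f i = 0) {i₀ : ι} (hi₀ : i₀ ∈ s) (h0 : v (f i₀) ≠ 0) :
    ∃ i₁ ∈ s, i₁ ≠ i₀ ∧ v (f i₀) ≤ v (f i₁) := by
  by_contra hcon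
  push_neg at hcon
  have hlt : ∀ i ∈ s.erase i₀, v (f i) < v (f i₀) := by
    intro i hi
    exact hcon i (Finset.mem_of_mem_erase hi) (Finset.ne_of_mem_erase hi)
  have h1 : v (∑ i ∈ s.erase i₀, f i) < v (f i₀) := Valuation.map_sum_lt v h0 hlt
  have h2 : ∑ i ∈ s.erase i₀, f i = - f i₀ := by
    have h := Finset.add_sum_erase s f hi₀
    rw [hsum] at h
    exact eq_neg_of_add_eq_zero_right h
  rw [h2, Valuation.map_neg] at h1
  exact lt_irrefl _ h1

end Helpers


variable {O : Type u} [CommRing O] [IsDomain O] [ValuationRing O]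

set_option synthInstance.maxHeartbeats 1000000 in
set_option maxHeartbeats 1000000 in
theorem MyAux.exists_of_mem_comap {L : Type v} [Field L] [Algebra (FractionRing O) L]
    (A : ValuationSubring L)
    (h : ∀ x, ((algebraMap (FractionRing O) L).comp (algebraMap O (FractionRing O))) x ∈ A)
    (hloc : IsLocalHom (RingHom.codRestrict
      ((algebraMap (FractionRing O) L).comp (algebraMap O (FractionRing O))) A.toSubring h))
    {c : FractionRing O} (hc : algebraMap (FractionRing O) L c ∈ A) :
    ∃ a : O, algebraMap O (FractionRing O) a = c := by
  classical
  let V₀ : ValuationSubring (FractionRing O) :=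
    ⟨(algebraMap O (FractionRing O)).range, ValuationRing.isInteger_or_isInteger O⟩
  let V : ValuationSubring (FractionRing O) := A.comap (algebraMap (FractionRing O) L)
  have hle : V₀.toLocalSubring ≤ V.toLocalSubring := by
    refine ⟨?_, ⟨?_⟩⟩
    · rintro x ⟨a, rfl⟩
      exact h a
    · rintro ⟨x, a, rfl⟩ hx
      obtain ⟨w, hw⟩ := isUnit_iff_exists_inv.mp hx
      have hwA : algebraMap (FractionRing O) L (w : FractionRing O) ∈ A := w.2
      have haA : IsUnit ((RingHom.codRestrict
          ((algebraMap (FractionRing O) L).comp (algebraMap O (FractionRing O)))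
          A.toSubring h) a) := by
        refine isUnit_iff_exists_inv.mpr
          ⟨⟨algebraMap (FractionRing O) L (w : FractionRing O), hwA⟩, ?_⟩
        have h1 : (algebraMap O (FractionRing O) a) * (w : FractionRing O) = 1 :=
          congrArg Subtype.val hw
        ext
        show algebraMap (FractionRing O) L (algebraMap O (FractionRing O) a) *
          algebraMap (FractionRing O) L (w : FractionRing O) = 1
        rw [← map_mul, h1, map_one]
      have ha : IsUnit a := hloc.map_nonunit a haA
      obtain ⟨b, hab⟩ := isUnit_iff_exists_inv.mp ha
      refine isUnit_iff_exists_inv.mpr ⟨⟨algebraMap O (FractionRing O) b, ⟨b, rfl⟩⟩, ?_⟩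
      ext
      show algebraMap O (FractionRing O) a * algebraMap O (FractionRing O) b = 1
      rw [← map_mul, hab, map_one]
  have hmax := V₀.isMax_toLocalSubring hle
  exact hmax.1 (show c ∈ V.toSubring from hc)


set_option maxHeartbeats 1000000 in
set_option synthInstance.maxHeartbeats 400000 in
theorem MyAux.value_cond {L : Type v} [Field L] [Algebra (FractionRing O) L]
    [Algebra.IsIntegral (FractionRing O) L]
    (hdiv : ∀ x : O, x ≠ 0 → ∀ n : ℕ, 0 < n → ∃ y : O, Associated (y ^ n) x)
    (A : ValuationSubring L)
    (h : ∀ x, ((algebraMap (FractionRing O) L).comp (algebraMap O (FractionRing O))) x ∈ A)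
    (hloc : IsLocalHom (RingHom.codRestrict
      ((algebraMap (FractionRing O) L).comp (algebraMap O (FractionRing O))) A.toSubring h))
    (x : A.toSubring) (hx : x ≠ 0) :
    ∃ (a : O) (u : (A.toSubring)ˣ),
      x = (RingHom.codRestrict
        ((algebraMap (FractionRing O) L).comp (algebraMap O (FractionRing O)))
        A.toSubring h) a * u := by
  classical
  have hψinj : Function.Injective (algebraMap (FractionRing O) L) := RingHom.injective _
  have hφinj : Function.Injective (algebraMap O (FractionRing O)) :=
    IsFractionRing.injective O (FractionRing O)
  have hz : (x : L) ≠ 0 := fun h0 => hx (Subtype.ext h0)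
  have hzint : IsIntegral (FractionRing O) ((x : L)) := Algebra.IsIntegral.isIntegral _
  set z : L := (x : L) with hzdef
  set q := minpoly (FractionRing O) z with hqdef
  set v := A.valuation with hvdef
  -- the sum identity
  have haev : ∑ i ∈ Finset.range (q.natDegree + 1),
      algebraMap (FractionRing O) L (q.coeff i) * z ^ i = 0 := by
    have h1 := minpoly.aeval (FractionRing O) z
    rw [Polynomial.aeval_eq_sum_range] at h1
    simpa [Algebra.smul_def] using h1
  set F : ℕ → L := fun i => algebraMap (FractionRing O) L (q.coeff i) * z ^ i with hFdef
  have hvF : ∀ i, q.coeff i ≠ 0 → v (F i) ≠ 0 := by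
    intro i hi
    simp only [hFdef, map_mul, map_pow]
    exact mul_ne_zero (v.ne_zero_iff.mpr (fun hc => hi (hψinj (by simpa using hc))))
      (pow_ne_zero _ (v.ne_zero_iff.mpr hz))
  set S := (Finset.range (q.natDegree + 1)).filter (fun i => q.coeff i ≠ 0) with hSdef
  have hdS : q.natDegree ∈ S := by
    simp only [hSdef, Finset.mem_filter, Finset.mem_range]
    exact ⟨Nat.lt_succ_self _, by
      rw [(minpoly.monic hzint).coeff_natDegree]; exact one_ne_zero⟩
  obtain ⟨i₀, hi₀S, hi₀max⟩ := Finset.exists_max_image S (fun i => v (F i)) ⟨_, hdS⟩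
  have hc₀ : q.coeff i₀ ≠ 0 := (Finset.mem_filter.mp hi₀S).2
  have hv0 : v (F i₀) ≠ 0 := hvF _ hc₀
  obtain ⟨i₁, hi₁mem, hi₁ne, hi₁ge⟩ :=
    MyAux.exists_ne_ge_of_sum_eq_zero v haev (Finset.mem_filter.mp hi₀S).1 hv0
  have hc₁ : q.coeff i₁ ≠ 0 := by
    intro hcc
    have hF0 : v (F i₁) = 0 := by simp [hFdef, hcc]
    exact hv0 (le_antisymm (hF0 ▸ hi₁ge) zero_le')
  have heq : v (F i₁) = v (F i₀) :=
    le_antisymm (hi₀max i₁ (Finset.mem_filter.mpr ⟨hi₁mem, hc₁⟩)) hi₁ge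
  -- key: v z ^ m = v (ψ c) for some 0 < m, c ≠ 0
  have key : ∃ (m : ℕ) (c : FractionRing O), 0 < m ∧ c ≠ 0 ∧
      v (algebraMap (FractionRing O) L c) = v z ^ m := by
    have hvz : v z ≠ 0 := v.ne_zero_iff.mpr hz
    have hvc : ∀ i, q.coeff i ≠ 0 → v (algebraMap (FractionRing O) L (q.coeff i)) ≠ 0 :=
      fun i hi => v.ne_zero_iff.mpr (fun hc => hi (hψinj (by simpa using hc)))
    have heq' : v (algebraMap (FractionRing O) L (q.coeff i₁)) * v z ^ i₁
        = v (algebraMap (FractionRing O) L (q.coeff i₀)) * v z ^ i₀ := by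
      simpa [hFdef, map_mul, map_pow] using heq
    rcases lt_or_gt_of_ne hi₁ne with hlt | hlt
    · -- i₁ < i₀ : v z ^ (i₀ - i₁) = v (ψ (c₁ / c₀))
      refine ⟨i₀ - i₁, q.coeff i₁ / q.coeff i₀, Nat.sub_pos_of_lt hlt,
        div_ne_zero hc₁ hc₀, ?_⟩
      rw [map_div₀, map_div₀]
      rw [div_eq_iff (hvc _ hc₀)]
      have hp : (v z) ^ i₁ * (v z) ^ (i₀ - i₁) = (v z) ^ i₀ := by
        rw [← pow_add]; congr 1; omega
      refine mul_right_cancel₀ (pow_ne_zero i₁ hvz) ?_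
      rw [heq', ← hp]
      simp only [mul_comm, mul_assoc, mul_left_comm]
    · refine ⟨i₁ - i₀, q.coeff i₀ / q.coeff i₁, Nat.sub_pos_of_lt hlt,
        div_ne_zero hc₀ hc₁, ?_⟩
      rw [map_div₀, map_div₀]
      rw [div_eq_iff (hvc _ hc₁)]
      have hp : (v z) ^ i₀ * (v z) ^ (i₁ - i₀) = (v z) ^ i₁ := by
        rw [← pow_add]; congr 1; omega
      refine mul_right_cancel₀ (pow_ne_zero i₀ hvz) ?_
      rw [← heq', ← hp]
      simp only [mul_comm, mul_assoc, mul_left_comm]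
  obtain ⟨m, c, hm, hc0, hvcm⟩ := key
  obtain ⟨s, t, htmem, hst⟩ := IsFractionRing.div_surjective (A := O) c
  have ht0 : t ≠ 0 := nonZeroDivisors.ne_zero htmem
  have ht0' : algebraMap O (FractionRing O) t ≠ 0 := fun h0 => ht0 (hφinj (by simpa using h0))
  have hs0 : s ≠ 0 := by
    intro h0
    apply hc0
    rw [← hst, h0, map_zero, zero_div]
  obtain ⟨y₁, u₁, hu₁⟩ := hdiv s hs0 m hm
  obtain ⟨y₂, u₂, hu₂⟩ := hdiv t ht0 m hm
  set g := (algebraMap (FractionRing O) L).comp (algebraMap O (FractionRing O)) with hgdef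
  have hginj : Function.Injective g := fun a b hab => hφinj (hψinj hab)
  set vφ : O → A.ValueGroup := fun a => v (g a) with hvφdef
  have hvφmul : ∀ a b : O, vφ (a * b) = vφ a * vφ b := fun a b => by
    simp [hvφdef, map_mul]
  have hvφpow : ∀ (a : O) (n : ℕ), vφ (a ^ n) = vφ a ^ n := fun a n => by
    simp [hvφdef, map_pow]
  have hle1 : ∀ a : O, vφ a ≤ 1 := fun a => A.valuation_le_one ⟨g a, h a⟩
  have hvφunit : ∀ w : Oˣ, vφ (w : O) = 1 := by
    intro w
    have h1 : vφ (w : O) * vφ ((w⁻¹ : Oˣ) : O) = 1 := by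
      rw [← hvφmul]
      simp [hvφdef]
    refine le_antisymm (hle1 _) ?_
    calc (1 : A.ValueGroup) = vφ (w : O) * vφ ((w⁻¹ : Oˣ) : O) := h1.symm
      _ ≤ vφ (w : O) * 1 := mul_le_mul_right (hle1 _) _
      _ = vφ (w : O) := mul_one _
  have hy₁0 : y₁ ≠ 0 := by
    intro h0
    exact hs0 (by rw [← hu₁, h0, zero_pow hm.ne', zero_mul])
  have hy₂0 : y₂ ≠ 0 := by
    intro h0
    exact ht0 (by rw [← hu₂, h0, zero_pow hm.ne', zero_mul])
  have hvφ0 : ∀ a : O, a ≠ 0 → vφ a ≠ 0 := fun a ha =>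
    v.ne_zero_iff.mpr (fun hh => ha (hginj (by simpa using hh)))
  have hvs : vφ s = vφ y₁ ^ m := by
    rw [← hu₁, hvφmul, hvφunit, mul_one, hvφpow]
  have hvt : vφ t = vφ y₂ ^ m := by
    rw [← hu₂, hvφmul, hvφunit, mul_one, hvφpow]
  have hvc' : v (algebraMap (FractionRing O) L c) = vφ y₁ ^ m / vφ y₂ ^ m := by
    rw [← hst, map_div₀, map_div₀, ← hvs, ← hvt]
    rfl
  have hpows : (vφ y₁ / vφ y₂) ^ m = v z ^ m := by
    rw [div_pow, ← hvc', hvcm]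
  have hkey : vφ y₁ / vφ y₂ = v z := (pow_left_inj₀ zero_le' zero_le' hm.ne').mp hpows
  have hvz1 : v z ≤ 1 := A.valuation_le_one ⟨z, x.2⟩
  set c' : FractionRing O :=
    algebraMap O (FractionRing O) y₁ / algebraMap O (FractionRing O) y₂ with hc'def
  have hψc' : v (algebraMap (FractionRing O) L c') = v z := by
    rw [hc'def, map_div₀, map_div₀, ← hkey]
    rfl
  have hc'A : algebraMap (FractionRing O) L c' ∈ A :=
    A.mem_of_valuation_le_one _ (by rw [hψc']; exact hvz1)
  obtain ⟨a, haeq⟩ := MyAux.exists_of_mem_comap A h hloc hc'A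
  have hvga : v (g a) = v z := by
    rw [show g a = algebraMap (FractionRing O) L (algebraMap O (FractionRing O) a) from rfl,
      haeq, hψc']
  obtain ⟨u, hu⟩ := (A.valuation_eq_iff z (g a)).mp (by rw [hvga])
  refine ⟨a, u, ?_⟩
  apply Subtype.ext
  show z = g a * ((u : ↥A.toSubring) : L)
  rw [← hu]
  exact (mul_comm _ _)


set_option maxHeartbeats 1000000 in
set_option synthInstance.maxHeartbeats 400000 in
theorem MyAux.residue_cond {L : Type v} [Field L] [Algebra (FractionRing O) L]
    [Algebra.IsIntegral (FractionRing O) L]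
    (hres : IsAlgClosed (ResidueField O))
    (A : ValuationSubring L)
    (h : ∀ x, ((algebraMap (FractionRing O) L).comp (algebraMap O (FractionRing O))) x ∈ A)
    (hloc : IsLocalHom (RingHom.codRestrict
      ((algebraMap (FractionRing O) L).comp (algebraMap O (FractionRing O))) A.toSubring h))
    [IsLocalRing A.toSubring]
    (x : A.toSubring) :
    ∃ a : O, x - (RingHom.codRestrict
        ((algebraMap (FractionRing O) L).comp (algebraMap O (FractionRing O)))
        A.toSubring h) a ∈ maximalIdeal A.toSubring := by
  classical
  have hψinj : Function.Injective (algebraMap (FractionRing O) L) := RingHom.injective _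
  have hφinj : Function.Injective (algebraMap O (FractionRing O)) :=
    IsFractionRing.injective O (FractionRing O)
  set g := (algebraMap (FractionRing O) L).comp (algebraMap O (FractionRing O)) with hgdef
  set fA := RingHom.codRestrict g A.toSubring h with hfAdef
  haveI : IsLocalHom fA := hloc
  set z : L := (x : L) with hzdef
  have hzint : IsIntegral (FractionRing O) z := Algebra.IsIntegral.isIntegral _
  set q := minpoly (FractionRing O) z with hqdef
  set v := A.valuation with hvdef
  set d := q.natDegree with hddef
  -- choose the coefficient with maximal valuation
  set S := (Finset.range (d + 1)).filter (fun i => q.coeff i ≠ 0) with hSdef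
  have hdS : d ∈ S := by
    simp only [hSdef, Finset.mem_filter, Finset.mem_range]
    exact ⟨Nat.lt_succ_self _, by
      rw [hddef, (minpoly.monic hzint).coeff_natDegree]; exact one_ne_zero⟩
  obtain ⟨i₀, hi₀S, hi₀max⟩ := Finset.exists_max_image S
    (fun i => v (algebraMap (FractionRing O) L (q.coeff i))) ⟨_, hdS⟩
  have hc₀ : q.coeff i₀ ≠ 0 := (Finset.mem_filter.mp hi₀S).2
  have hψc₀ : algebraMap (FractionRing O) L (q.coeff i₀) ≠ 0 := fun h0 =>
    hc₀ (hψinj (by simpa using h0))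
  have hv₀pos : (0 : A.ValueGroup) < v (algebraMap (FractionRing O) L (q.coeff i₀)) :=
    lt_of_le_of_ne zero_le' (Ne.symm (v.ne_zero_iff.mpr hψc₀))
  -- all normalized coefficients lie in A, hence come from O
  have hbA : ∀ i, algebraMap (FractionRing O) L (q.coeff i / q.coeff i₀) ∈ A := by
    intro i
    by_cases hci : q.coeff i = 0
    · rw [hci, zero_div, map_zero]; exact A.zero_mem
    · apply A.mem_of_valuation_le_one
      rw [map_div₀, map_div₀]
      rw [div_le_one₀ hv₀pos]
      exact hi₀max i (Finset.mem_filter.mpr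
        ⟨Finset.mem_range.mpr (Nat.lt_succ_of_le (le_natDegree_of_ne_zero hci)), hci⟩)
  have ho : ∀ i, ∃ a : O, algebraMap O (FractionRing O) a = q.coeff i / q.coeff i₀ :=
    fun i => MyAux.exists_of_mem_comap A h hloc (hbA i)
  choose o ho using ho
  -- the sum over the normalized coefficients vanishes
  have haev : ∑ i ∈ Finset.range (d + 1),
      algebraMap (FractionRing O) L (q.coeff i) * z ^ i = 0 := by
    have h1 := minpoly.aeval (FractionRing O) z
    rw [Polynomial.aeval_eq_sum_range] at h1
    simpa [Algebra.smul_def] using h1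
  have hsum0 : ∑ i ∈ Finset.range (d + 1), g (o i) * z ^ i = 0 := by
    have : ∀ i, g (o i) = algebraMap (FractionRing O) L (q.coeff i)
        * (algebraMap (FractionRing O) L (q.coeff i₀))⁻¹ := by
      intro i
      rw [hgdef, RingHom.comp_apply, ho i, map_div₀, div_eq_mul_inv]
    calc ∑ i ∈ Finset.range (d + 1), g (o i) * z ^ i
        = (∑ i ∈ Finset.range (d + 1),
            algebraMap (FractionRing O) L (q.coeff i) * z ^ i)
            * (algebraMap (FractionRing O) L (q.coeff i₀))⁻¹ := by
          rw [Finset.sum_mul]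
          refine Finset.sum_congr rfl (fun i _ => ?_)
          rw [this i]
          ring
      _ = 0 := by rw [haev, zero_mul]
  -- the corresponding sum in A vanishes
  have hTA : ∑ i ∈ Finset.range (d + 1), fA (o i) * x ^ i = 0 := by
    apply Subtype.ext
    have := map_sum A.toSubring.subtype
      (fun i => fA (o i) * x ^ i) (Finset.range (d + 1))
    rw [show ((∑ i ∈ Finset.range (d + 1), fA (o i) * x ^ i : A.toSubring) : L)
      = A.toSubring.subtype (∑ i ∈ Finset.range (d + 1), fA (o i) * x ^ i) from rfl, this]
    simpa [hfAdef, hzdef] using hsum0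
  -- pass to residue fields
  set k := ResidueField O with hkdef
  set ρ := residue (A.toSubring) with hρdef
  set κ := ResidueField.map fA with hκdef
  have hressum : ∑ i ∈ Finset.range (d + 1), κ (residue O (o i)) * (ρ x) ^ i = 0 := by
    have := congrArg ρ hTA
    rw [map_sum ρ _ _, map_zero] at this
    rw [← this]
    refine Finset.sum_congr rfl (fun i _ => ?_)
    rw [map_mul, map_pow, hκdef, ResidueField.map_residue]
  -- build the polynomial over the residue field
  set Q : Polynomial k := ∑ i ∈ Finset.range (d + 1), monomial i (residue O (o i)) with hQdef
  have hQcoeff : ∀ j, Q.coeff j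
      = if j ∈ Finset.range (d + 1) then residue O (o j) else 0 := by
    intro j
    rw [hQdef, finset_sum_coeff]
    rw [Finset.sum_congr rfl (fun i _ => coeff_monomial (m := j) (n := i) (a := residue O (o i)))]
    exact Finset.sum_ite_eq' (Finset.range (d + 1)) j (fun i => residue O (o i))
  have ho₀ : o i₀ = 1 := by
    apply hφinj
    rw [ho i₀, div_self hc₀, map_one]
  have hQne : Q ≠ 0 := by
    intro h0
    have := hQcoeff i₀
    rw [h0] at this
    simp only [coeff_zero] at this
    rw [if_pos (Finset.mem_range.mpr (Nat.lt_succ_of_le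
      (le_natDegree_of_ne_zero hc₀))), ho₀, map_one] at this
    exact one_ne_zero this.symm
  have hκinj : Function.Injective κ := κ.injective
  have hQκne : Q.map κ ≠ 0 := fun h0 => hQne ((Polynomial.map_injective κ hκinj) (by simpa using h0))
  have hroot : (Q.map κ).IsRoot (ρ x) := by
    show eval (ρ x) (Q.map κ) = 0
    rw [eval_map, hQdef, eval₂_finset_sum]
    rw [← hressum]
    refine Finset.sum_congr rfl (fun i _ => ?_)
    rw [eval₂_monomial]
  have hmem : ρ x ∈ (Q.map κ).roots := (mem_roots'.mpr ⟨hQκne, hroot⟩)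
  haveI := hres
  have hsplit : Q.Splits := IsAlgClosed.splits Q
  rw [hsplit.roots_map κ] at hmem
  obtain ⟨r', hr'mem, hr'eq⟩ := Multiset.mem_map.mp hmem
  obtain ⟨a, ha⟩ := residue_surjective r'
  refine ⟨a, ?_⟩
  rw [← residue_eq_zero_iff]
  rw [map_sub]
  rw [show ρ (fA a) = κ (residue O a) from (ResidueField.map_residue fA a).symm]
  rw [ha, hr'eq]
  exact sub_self _


theorem MyAux.div_of_algClosed (hK : IsAlgClosed (FractionRing O)) :
    ∀ x : O, x ≠ 0 → ∀ n : ℕ, 0 < n → ∃ y : O, Associated (y ^ n) x := by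
  intro x hx n hn
  haveI : IsIntegrallyClosed O := MyAux.isIntegrallyClosed (O := O)
  set P : Polynomial (FractionRing O) := X ^ n - C (algebraMap O (FractionRing O) x) with hP
  have hdeg : P.degree ≠ 0 := by
    rw [hP, degree_X_pow_sub_C hn]
    exact_mod_cast hn.ne'
  obtain ⟨y', hy'⟩ := IsAlgClosed.exists_root P hdeg
  have hy'n : y' ^ n = algebraMap O (FractionRing O) x := by
    have h1 : eval y' P = 0 := hy'
    rw [hP] at h1
    simpa [sub_eq_zero] using h1
  have hint : IsIntegral O y' := ⟨X ^ n - C x, monic_X_pow_sub_C x hn.ne', by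
    simp [hy'n]⟩
  obtain ⟨y, hy⟩ := IsIntegrallyClosed.isIntegral_iff.mp hint
  refine ⟨y, ?_⟩
  have h2 : algebraMap O (FractionRing O) (y ^ n) = algebraMap O (FractionRing O) x := by
    rw [map_pow, hy, hy'n]
  rw [IsFractionRing.injective O (FractionRing O) h2]

theorem MyAux.res_of_algClosed (hK : IsAlgClosed (FractionRing O)) :
    IsAlgClosed (ResidueField O) := by
  haveI : IsIntegrallyClosed O := MyAux.isIntegrallyClosed (O := O)
  apply IsAlgClosed.of_exists_root
  intro P Pmonic Pirr
  have hlift : P ∈ Polynomial.lifts (residue O) := by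
    obtain ⟨P', hP'⟩ := Polynomial.map_surjective (residue O) residue_surjective P
    exact (Polynomial.mem_lifts P).mpr ⟨P', hP'⟩
  obtain ⟨q, hq_map, hq_deg, hq_monic⟩ := Polynomial.lifts_and_degree_eq_and_monic hlift Pmonic
  have hdeg : (q.map (algebraMap O (FractionRing O))).degree ≠ 0 := by
    rw [hq_monic.degree_map, hq_deg]
    intro h0
    have h1 : P.natDegree = 0 := natDegree_eq_zero_iff_degree_le_zero.mpr (le_of_eq h0)
    exact Pirr.natDegree_pos.ne' h1
  obtain ⟨y', hy'⟩ := IsAlgClosed.exists_root _ hdeg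
  have hint : IsIntegral O y' := ⟨q, hq_monic, by rwa [← eval_map]⟩
  obtain ⟨y, hy⟩ := IsIntegrallyClosed.isIntegral_iff.mp hint
  have hq0 : eval y q = 0 := by
    apply IsFractionRing.injective O (FractionRing O)
    rw [map_zero, ← eval₂_at_apply, hy, ← eval_map]
    exact hy'
  refine ⟨residue O y, ?_⟩
  rw [← hq_map, eval_map, eval₂_at_apply, hq0, map_zero]


set_option maxHeartbeats 1000000 in
set_option synthInstance.maxHeartbeats 400000 in
theorem MyAux.backward (hmax : IsMaximalValRing O)
    (hres : IsAlgClosed (ResidueField O))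
    (hdiv : ∀ x : O, x ≠ 0 → ∀ n : ℕ, 0 < n → ∃ y : O, Associated (y ^ n) x) :
    IsAlgClosed (FractionRing O) := by
  apply IsAlgClosed.of_exists_root
  intro p pmonic pirr
  haveI : Fact (Irreducible p) := ⟨pirr⟩
  set L := AdjoinRoot p with hLdef
  haveI : FiniteDimensional (FractionRing O) L :=
    PowerBasis.finite (AdjoinRoot.powerBasis pmonic.ne_zero)
  obtain ⟨A, hA, hloc⟩ := IsLocalRing.exists_factor_valuationRing
    ((algebraMap (FractionRing O) L).comp (algebraMap O (FractionRing O)))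
  haveI : ValuationRing (A.toSubring) := inferInstanceAs (ValuationRing A)
  haveI : IsLocalRing (A.toSubring) := inferInstanceAs (IsLocalRing A)
  set fA := RingHom.codRestrict
    ((algebraMap (FractionRing O) L).comp (algebraMap O (FractionRing O)))
    A.toSubring hA with hfAdef
  have hinj : Function.Injective fA := by
    intro a b hab
    have h1 := congrArg (Subtype.val) hab
    exact (IsFractionRing.injective O (FractionRing O))
      ((RingHom.injective (algebraMap (FractionRing O) L)) h1)
  have hsurj := hmax A.toSubring fA hinj hloc
    (fun x => MyAux.residue_cond hres A hA hloc x)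
    (fun x hx => MyAux.value_cond hdiv A hA hloc x hx)
  have hKsurj : Function.Surjective (algebraMap (FractionRing O) L) := by
    intro w
    rcases A.mem_or_inv_mem w with hw | hw
    · obtain ⟨a, ha⟩ := hsurj ⟨w, hw⟩
      exact ⟨algebraMap O (FractionRing O) a, congrArg Subtype.val ha⟩
    · by_cases hw0 : w = 0
      · exact ⟨0, by rw [map_zero, hw0]⟩
      · obtain ⟨a, ha⟩ := hsurj ⟨w⁻¹, hw⟩
        refine ⟨(algebraMap O (FractionRing O) a)⁻¹, ?_⟩
        rw [map_inv₀, show algebraMap (FractionRing O) L (algebraMap O (FractionRing O) a)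
          = w⁻¹ from congrArg Subtype.val ha, inv_inv]
  obtain ⟨c, hc⟩ := hKsurj (AdjoinRoot.root p)
  refine ⟨c, ?_⟩
  apply RingHom.injective (algebraMap (FractionRing O) L)
  rw [map_zero, ← eval₂_at_apply, hc]
  rw [show algebraMap (FractionRing O) L = AdjoinRoot.of p from AdjoinRoot.algebraMap_eq _]
  exact AdjoinRoot.eval₂_root p


/-- **Corollary (max-val-alg-clos).** A maximal valuation field is algebraically closed
if and only if its residue field is algebraically closed and its value group is
divisible. -/
theorem maximal_valuation_field_isAlgClosed_iff
    (O : Type u) [CommRing O] [IsDomain O] [ValuationRing O]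
    (hmax : IsMaximalValRing O) :
    IsAlgClosed (FractionRing O) ↔
      (IsAlgClosed (ResidueField O) ∧
        ∀ x : O, x ≠ 0 → ∀ n : ℕ, 0 < n → ∃ y : O, Associated (y ^ n) x) := by
  constructor
  · intro hK
    exact ⟨MyAux.res_of_algClosed hK, MyAux.div_of_algClosed hK⟩
  · rintro ⟨hres, hdiv⟩
    exact MyAux.backward hmax hres hdiv
end

section
/- Let M be a torsion ℤ_p-module whose p-adic completion M̂ has bounded p-power torsion, i.e., M̂[p^∞] = M̂[p^m] for some m. Then M̂ = M̂[p^m], and the submodule ∩_{k∈ℕ} p^k M satisfies ∩_k p^k M = p·(∩_k p^k M). -/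
/-- **Lemma (torsion-completion).** Let `M` be a torsion `ℤ_p`-module whose `p`-adic
completion `M̂` has bounded `p`-power torsion (`M̂[p^∞] = M̂[p^m]` for some `m`).  Then
`M̂ = M̂[p^m]`, and `⋂_k p^k M = p · ⋂_k p^k M`. -/
theorem torsion_padic_completion (p : ℕ) [Fact p.Prime]
    (M : Type*) [AddCommGroup M] [Module ℤ_[p] M]
    (htors : ∀ x : M, ∃ k : ℕ, (p : ℤ_[p]) ^ k • x = 0)
    (m : ℕ)
    (hbd : ∀ x : AdicCompletion (Ideal.span {(p : ℤ_[p])}) M,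
      (∃ k : ℕ, (p : ℤ_[p]) ^ k • x = 0) → (p : ℤ_[p]) ^ m • x = 0) :
    (∀ x : AdicCompletion (Ideal.span {(p : ℤ_[p])}) M, (p : ℤ_[p]) ^ m • x = 0) ∧
    (⨅ k : ℕ, (Ideal.span {(p : ℤ_[p]) ^ k} • (⊤ : Submodule ℤ_[p] M))) =
      Ideal.span {(p : ℤ_[p])} •
        ⨅ k : ℕ, (Ideal.span {(p : ℤ_[p]) ^ k} • (⊤ : Submodule ℤ_[p] M)) := by
  set I : Ideal ℤ_[p] := Ideal.span {(p : ℤ_[p])} with hI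
  -- any torsion element of M maps to a p^m-torsion element of the completion,
  -- hence p^m • (of y) = 0 for all y : M
  have hof : ∀ y : M, (p : ℤ_[p]) ^ m • (AdicCompletion.of I M y) = 0 := by
    intro y
    apply hbd
    obtain ⟨k, hk⟩ := htors y
    exact ⟨k, by rw [← map_smul, hk, map_zero]⟩
  have hpow : ∀ k : ℕ, I ^ k = Ideal.span {(p : ℤ_[p]) ^ k} := fun k =>
    Ideal.span_singleton_pow _ _
  constructor
  · -- part 1
    intro x
    apply AdicCompletion.ext
    intro n
    have hs : ((p : ℤ_[p]) ^ m • x).val n = (p : ℤ_[p]) ^ m • (x.val n) := rfl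
    obtain ⟨y, hy⟩ := Submodule.mkQ_surjective (I ^ n • ⊤ : Submodule ℤ_[p] M) (x.val n)
    have h0 := congrArg (fun z => z.val n) (hof y)
    beta_reduce at h0
    have : ((p : ℤ_[p]) ^ m • AdicCompletion.of I M y).val n
        = (p : ℤ_[p]) ^ m • Submodule.mkQ (I ^ n • ⊤ : Submodule ℤ_[p] M) y := rfl
    rw [this] at h0
    show ((p : ℤ_[p]) ^ m • x).val n = (0 : AdicCompletion I M).val n
    rw [hs, ← hy]
    exact h0
  · -- part 2
    refine le_antisymm ?_ Submodule.smul_le_right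
    intro x hx
    rw [Submodule.mem_iInf] at hx
    -- x ∈ span {p^(m+1)} • ⊤, so x = p^(m+1) • y
    have hx1 := hx (m + 1)
    rw [Submodule.ideal_span_singleton_smul] at hx1
    obtain ⟨y, -, hy⟩ := Set.mem_smul_set.mp hx1
    -- p^m • y lies in every span{p^k} • ⊤ since of (p^m • y) = 0
    have hker : ∀ k : ℕ, (p : ℤ_[p]) ^ m • y ∈ Ideal.span {(p : ℤ_[p]) ^ k} • (⊤ : Submodule ℤ_[p] M) := by
      intro k
      have h0 := congrArg (fun z => z.val k) (hof y)
      beta_reduce at h0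
      have h1 : ((p : ℤ_[p]) ^ m • AdicCompletion.of I M y).val k
          = Submodule.mkQ (I ^ k • ⊤ : Submodule ℤ_[p] M) ((p : ℤ_[p]) ^ m • y) := by
        rw [map_smul]; rfl
      rw [h1] at h0
      have h2 : (p : ℤ_[p]) ^ m • y ∈ (I ^ k • ⊤ : Submodule ℤ_[p] M) := by
        rwa [← Submodule.Quotient.mk_eq_zero]
      rwa [hpow k] at h2
    have hmem : (p : ℤ_[p]) ^ m • y ∈
        ⨅ k : ℕ, (Ideal.span {(p : ℤ_[p]) ^ k} • (⊤ : Submodule ℤ_[p] M)) :=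
      Submodule.mem_iInf _ |>.mpr hker
    have hx2 : x = (p : ℤ_[p]) • ((p : ℤ_[p]) ^ m • y) := by
      rw [← hy, smul_smul, ← pow_succ']
    rw [hx2]
    exact Submodule.smul_mem_smul (Ideal.mem_span_singleton_self _) hmem
end

section
/- Let A be a ring, π ∈ A, and let S_π(A) be the set of prime ideals 𝔭 of A such that the localization A_𝔭 is a valuation ring of height 1 with π ∈ 𝔭A_𝔭 and π ≠ 0 in A_𝔭. Then for each 𝔭 ∈ S_π(A), the pair (Spec(A_𝔭[1/π]) → Spec(A_𝔭)) determines an element of Val_{Spec(A[1/π])}(Spec(A)): namely, A_𝔭 is a valuation ring with fraction field A_𝔭[1/π] and the morphism Spec(A_𝔭[1/π]) → Spec(A[1/π]) ×_{Spec A} Spec(A_𝔭) is an isomorphism. -/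
open IsLocalRing

section

variable {A : Type u} [CommRing A] (π : A) (𝔭 : Ideal A) [𝔭.IsPrime]

/-- `A_𝔭[1/π]`, the localization of `A_𝔭` away from (the image of) `π`. -/
noncomputable abbrev LocAwayPi : Type u :=
  Localization.Away (algebraMap A (Localization.AtPrime 𝔭) π)

noncomputable instance : Algebra A (LocAwayPi π 𝔭) :=
  ((algebraMap (Localization.AtPrime 𝔭) (LocAwayPi π 𝔭)).comp
    (algebraMap A (Localization.AtPrime 𝔭))).toAlgebra

lemma LocAwayPi.isUnit_powers (y : Submonoid.powers π) :
    IsUnit (algebraMap A (LocAwayPi π 𝔭) y) := by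
  obtain ⟨y, n, rfl⟩ := y
  have h : IsUnit (algebraMap (Localization.AtPrime 𝔭) (LocAwayPi π 𝔭)
      (algebraMap A (Localization.AtPrime 𝔭) π)) :=
    IsLocalization.map_units (M := Submonoid.powers (algebraMap A (Localization.AtPrime 𝔭) π))
      (LocAwayPi π 𝔭) ⟨_, Submonoid.mem_powers _⟩
  have : algebraMap A (LocAwayPi π 𝔭) (π ^ n) =
      (algebraMap (Localization.AtPrime 𝔭) (LocAwayPi π 𝔭)
        (algebraMap A (Localization.AtPrime 𝔭) π)) ^ n := by
    simp [map_pow]; rfl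
  rw [this]
  exact h.pow n

/-- The canonical `A`-algebra map `A[1/π] → A_𝔭[1/π]`. -/
noncomputable def awayToLocAway : Localization.Away π →ₐ[A] LocAwayPi π 𝔭 :=
  { toRingHom := IsLocalization.lift (M := Submonoid.powers π)
      (g := algebraMap A (LocAwayPi π 𝔭)) (LocAwayPi.isUnit_powers π 𝔭),
    commutes' := fun a => IsLocalization.lift_eq (LocAwayPi.isUnit_powers π 𝔭) a }

/-- The canonical `A`-algebra map `A_𝔭 → A_𝔭[1/π]`. -/
noncomputable def atPrimeToLocAway : Localization.AtPrime 𝔭 →ₐ[A] LocAwayPi π 𝔭 :=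
  { toRingHom := algebraMap (Localization.AtPrime 𝔭) (LocAwayPi π 𝔭),
    commutes' := fun _ => rfl }

/-- The canonical map `A[1/π] ⊗_A A_𝔭 → A_𝔭[1/π]`, i.e. the comparison morphism of the
fibre product `Spec(A[1/π]) ×_{Spec A} Spec(A_𝔭)` with `Spec(A_𝔭[1/π])`. -/
noncomputable def fibreProductComparison :
    TensorProduct A (Localization.Away π) (Localization.AtPrime 𝔭) →ₐ[A] LocAwayPi π 𝔭 :=
  Algebra.TensorProduct.productMap (awayToLocAway π 𝔭) (atPrimeToLocAway π 𝔭)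

end

/-- **Corollary (ht-1-spa).** Let `A` be a ring, `π ∈ A`, and `𝔭` a prime of `A` such
that `A_𝔭` is a valuation ring of height 1 with `π ∈ 𝔭A_𝔭 ∖ {0}`.  Then the pair
`(Spec(A_𝔭[1/π]) → Spec(A_𝔭))` determines an element of `Val_{Spec(A[1/π])}(Spec A)`:
`A_𝔭` is a valuation ring with fraction field `A_𝔭[1/π]`, and the canonical morphism
`Spec(A_𝔭[1/π]) → Spec(A[1/π]) ×_{Spec A} Spec(A_𝔭)` is an isomorphism (the comparison
ring map is bijective). -/
theorem atPrime_determines_val_element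
    {A : Type u} [CommRing A] (π : A) (𝔭 : Ideal A) [𝔭.IsPrime]
    [IsDomain (Localization.AtPrime 𝔭)] [ValuationRing (Localization.AtPrime 𝔭)]
    (hne : algebraMap A (Localization.AtPrime 𝔭) π ≠ 0)
    (hmem : algebraMap A (Localization.AtPrime 𝔭) π ∈ maximalIdeal (Localization.AtPrime 𝔭))
    (hht : ∀ q : Ideal (Localization.AtPrime 𝔭), q.IsPrime → q ≠ ⊥ →
      q = maximalIdeal (Localization.AtPrime 𝔭)) :
    IsFractionRing (Localization.AtPrime 𝔭) (LocAwayPi π 𝔭) ∧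
    Function.Bijective ⇑(fibreProductComparison π 𝔭) := by
  set R := Localization.AtPrime 𝔭
  set π' : R := algebraMap A R π with hπ'
  -- Part 1: fraction ring
  have hdvd : ∀ n ∈ nonZeroDivisors R, ∃ m ∈ Submonoid.powers π', n ∣ m := by
    intro r hr
    by_cases hu : IsUnit r
    · exact ⟨1, one_mem _, hu.dvd⟩
    · have hr0 : r ≠ 0 := mem_nonZeroDivisors_iff_ne_zero.mp hr
      have hrad : π' ∈ (Ideal.span {r}).radical := by
        rw [Ideal.radical_eq_sInf]
        refine Ideal.mem_sInf.mpr ?_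
        rintro J ⟨hle, hJ⟩
        have hrJ : r ∈ J := hle (Ideal.subset_span rfl)
        have hJne : J ≠ ⊥ := fun h => hr0 (by simpa [h, Ideal.mem_bot] using hrJ)
        rw [hht J hJ hJne]
        exact hmem
      obtain ⟨n, hn⟩ := Ideal.mem_radical_iff.mp hrad
      exact ⟨π' ^ n, ⟨n, rfl⟩, Ideal.mem_span_singleton.mp hn⟩
  have hle : Submonoid.powers π' ≤ nonZeroDivisors R := by
    rintro x ⟨n, rfl⟩
    exact mem_nonZeroDivisors_iff_ne_zero.mpr (pow_ne_zero n hne)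
  have hfrac : IsFractionRing R (LocAwayPi π 𝔭) :=
    IsLocalization.of_le_of_exists_dvd (Submonoid.powers π') _ hle hdvd
  refine ⟨hfrac, ?_⟩
  -- Part 2: bijectivity of the comparison map
  set T := TensorProduct A (Localization.Away π) R
  have hunit : ∀ y : Submonoid.powers π',
      IsUnit ((Algebra.TensorProduct.includeRight : R →ₐ[A] T).toRingHom y) := by
    rintro ⟨y, n, rfl⟩
    have h1 : (Algebra.TensorProduct.includeRight : R →ₐ[A] T) π' =
        (Algebra.TensorProduct.includeLeft : Localization.Away π →ₐ[A] T)
          (algebraMap A (Localization.Away π) π) := by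
      rw [hπ']
      exact (Algebra.TensorProduct.includeRight.commutes (R := A) π).trans
        (Algebra.TensorProduct.includeLeft.commutes π).symm
    have hu : IsUnit ((Algebra.TensorProduct.includeLeft :
        Localization.Away π →ₐ[A] T) (algebraMap A (Localization.Away π) π)) :=
      (IsLocalization.map_units (M := Submonoid.powers π) (Localization.Away π)
        ⟨π, Submonoid.mem_powers π⟩).map _
    simpa [map_pow, h1] using (hu.pow n)
  set g : LocAwayPi π 𝔭 →+* T := IsLocalization.lift (M := Submonoid.powers π') hunit with hg
  set fp := (fibreProductComparison π 𝔭).toRingHom with hfp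
  have hfpg : fp.comp g = RingHom.id (LocAwayPi π 𝔭) := by
    apply IsLocalization.ringHom_ext (Submonoid.powers π')
    ext x
    simp only [RingHom.coe_comp, Function.comp_apply, RingHom.id_apply]
    rw [hg, IsLocalization.lift_eq]
    show fp ((Algebra.TensorProduct.includeRight : R →ₐ[A] T) x) = _
    rw [hfp]
    show (fibreProductComparison π 𝔭) (Algebra.TensorProduct.includeRight x) = _
    rw [show (fibreProductComparison π 𝔭) (Algebra.TensorProduct.includeRight x)
        = ((fibreProductComparison π 𝔭).comp Algebra.TensorProduct.includeRight) x from rfl,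
      fibreProductComparison, Algebra.TensorProduct.productMap_right]
    rfl
  let gA : LocAwayPi π 𝔭 →ₐ[A] T :=
    { toRingHom := g,
      commutes' := fun a => by
        show g (algebraMap R (LocAwayPi π 𝔭) (algebraMap A R a)) = _
        rw [hg, IsLocalization.lift_eq]
        exact Algebra.TensorProduct.includeRight.commutes a }
  have hgfp : gA.comp (fibreProductComparison π 𝔭) = AlgHom.id A T := by
    apply Algebra.TensorProduct.ext
    · apply AlgHom.coe_ringHom_injective
      apply IsLocalization.ringHom_ext (Submonoid.powers π)
      ext a
      simp [AlgHom.commutes]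
    · apply AlgHom.coe_ringHom_injective
      apply IsLocalization.ringHom_ext (𝔭.primeCompl)
      ext a
      simp [AlgHom.commutes]
  rw [Function.bijective_iff_has_inverse]
  refine ⟨g, fun x => ?_, fun x => ?_⟩
  · exact DFunLike.congr_fun hgfp x
  · exact RingHom.congr_fun hfpg x
end

section
/- Let (Y_λ → X_λ)_{λ∈Λ} be a directed inverse system of morphisms of coherent schemes with affine transition morphisms, and (Y → X) its inverse limit. Then the canonical map Spa(Y, X) → lim_λ Spa(Y_λ, X_λ) of topological spaces is a homeomorphism. -/
/-- A point of `Spa(B, A)` for a ring homomorphism `f : A →+* B` (the affine incarnation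
of `Spa(Y, X)` for `Y → X` a morphism of coherent schemes): a point `y` of `Spec B`
(a prime `q`) together with a valuation subring `𝒪_W` of the residue field
`κ(y) = Frac(B/q)` containing the image of `A`. -/
structure SpaPt {A B : Type u} [CommRing A] [CommRing B] (f : A →+* B) where
  /-- the prime ideal of `B` corresponding to the point `y ∈ Spec B` -/
  q : Ideal B
  isPrime : q.IsPrime
  /-- the valuation ring `𝒪_W ⊆ κ(y)` -/
  W : Subring (FractionRing (B ⧸ q))
  /-- `𝒪_W` is a valuation subring of `κ(y)` -/
  val : ∀ x : FractionRing (B ⧸ q), x ∈ W ∨ ∃ y ∈ W, x * y = 1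
  /-- `𝒪_W` contains the image of `A` -/
  mapsTo : ∀ a : A,
    algebraMap (B ⧸ q) (FractionRing (B ⧸ q)) (Ideal.Quotient.mk q (f a)) ∈ W

/-- The subset `Spa(B[1/b₀], A[b₁/b₀, …, b_n/b₀])` of `Spa(B, A)`. -/
def SpaPt.basicSet {A B : Type u} [CommRing A] [CommRing B] (f : A →+* B) (b₀ : B)
    {n : ℕ} (b : Fin n → B) : Set (SpaPt f) :=
  {x | algebraMap (B ⧸ x.q) (FractionRing (B ⧸ x.q)) (Ideal.Quotient.mk x.q b₀) ≠ 0 ∧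
    ∀ i : Fin n, ∃ w ∈ x.W,
      algebraMap (B ⧸ x.q) (FractionRing (B ⧸ x.q)) (Ideal.Quotient.mk x.q (b i)) =
        algebraMap (B ⧸ x.q) (FractionRing (B ⧸ x.q)) (Ideal.Quotient.mk x.q b₀) * w}

/-- The topology of `Spa(B, A)`, generated by its (rational) affine subsets. -/
instance {A B : Type u} [CommRing A] [CommRing B] (f : A →+* B) :
    TopologicalSpace (SpaPt f) :=
  TopologicalSpace.generateFrom
    {U | ∃ (b₀ : B) (n : ℕ) (b : Fin n → B), U = SpaPt.basicSet f b₀ b}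

/-- Functoriality of `Spa`: a commuting square of ring homomorphisms, from `A → B` to
`A' → B'`, induces a map `Spa(B', A') → Spa(B, A)` sending `(y' → W')` to `(y → W)`,
where `y` is the image of `y'` and `𝒪_W = κ(y) ∩ 𝒪_{W'}` inside `κ(y')`. -/
noncomputable def spaMap {A B A' B' : Type u} [CommRing A] [CommRing B] [CommRing A']
    [CommRing B'] (f : A →+* B) (f' : A' →+* B') (α : A →+* A') (β : B →+* B')
    (hsq : β.comp f = f'.comp α) (x : SpaPt f') : SpaPt f :=
  haveI := x.isPrime
  haveI : (x.q.comap β).IsPrime := Ideal.IsPrime.comap β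
  let g : B ⧸ x.q.comap β →+* B' ⧸ x.q := Ideal.quotientMap x.q β le_rfl
  let gK : FractionRing (B ⧸ x.q.comap β) →+* FractionRing (B' ⧸ x.q) :=
    IsFractionRing.lift (g := (algebraMap (B' ⧸ x.q) (FractionRing (B' ⧸ x.q))).comp g)
      ((IsFractionRing.injective (B' ⧸ x.q) (FractionRing (B' ⧸ x.q))).comp
        Ideal.quotientMap_injective)
  { q := x.q.comap β
    isPrime := inferInstance
    W := x.W.comap gK
    val := fun z => by
      rcases x.val (gK z) with h | ⟨y, hyW, hy1⟩
      · exact Or.inl (Subring.mem_comap.mpr h)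
      · right
        have hz : z ≠ 0 := by
          rintro rfl
          rw [map_zero, zero_mul] at hy1
          exact one_ne_zero hy1.symm
        refine ⟨z⁻¹, Subring.mem_comap.mpr ?_, mul_inv_cancel₀ hz⟩
        have hinv : gK z⁻¹ = y := by
          rw [map_inv₀]
          exact inv_eq_of_mul_eq_one_right hy1
        rw [hinv]; exact hyW
    mapsTo := fun a => by
      refine Subring.mem_comap.mpr ?_
      have key : gK (algebraMap (B ⧸ x.q.comap β) (FractionRing (B ⧸ x.q.comap β))
          (Ideal.Quotient.mk (x.q.comap β) (f a))) =
          algebraMap (B' ⧸ x.q) (FractionRing (B' ⧸ x.q))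
            (Ideal.Quotient.mk x.q (f' (α a))) := by
        show IsFractionRing.lift _ (algebraMap (B ⧸ x.q.comap β) _ _) = _
        rw [IsFractionRing.lift_algebraMap]
        simp only [RingHom.comp_apply]
        congr 1
        show Ideal.quotientMap x.q β le_rfl (Ideal.Quotient.mk _ (f a)) = _
        rw [Ideal.quotientMap_mk]
        exact congrArg _ (RingHom.congr_fun hsq a)
      rw [key]
      exact x.mapsTo (α a) }


/-! ### Auxiliary machinery -/


section basic
variable {B : Type u} [CommRing B]

/-- The composite `B → B ⧸ q → Frac(B ⧸ q)`. -/
noncomputable def frK (q : Ideal B) : B →+* FractionRing (B ⧸ q) :=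
  (algebraMap (B ⧸ q) (FractionRing (B ⧸ q))).comp (Ideal.Quotient.mk q)

theorem frK_eq_zero_iff (q : Ideal B) [q.IsPrime] {b : B} :
    frK q b = 0 ↔ b ∈ q := by
  rw [frK, RingHom.comp_apply, IsFractionRing.to_map_eq_zero_iff,
    Ideal.Quotient.eq_zero_iff_mem]

theorem frK_ne_zero (q : Ideal B) [q.IsPrime] {b : B} (hb : b ∉ q) : frK q b ≠ 0 :=
  fun h0 => hb ((frK_eq_zero_iff q).mp h0)

/-- Every element of `Frac(B ⧸ q)` is a fraction of images of elements of `B`. -/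
theorem frac_surjective (q : Ideal B) [q.IsPrime] (z : FractionRing (B ⧸ q)) :
    ∃ b c : B, c ∉ q ∧ frK q b / frK q c = z := by
  obtain ⟨x, y, hy, hz⟩ := IsFractionRing.div_surjective (A := B ⧸ q) z
  obtain ⟨b, rfl⟩ := Ideal.Quotient.mk_surjective x
  obtain ⟨c, rfl⟩ := Ideal.Quotient.mk_surjective y
  refine ⟨b, c, ?_, hz⟩
  intro hc
  rw [← Ideal.Quotient.eq_zero_iff_mem] at hc
  rw [hc] at hy
  exact nonZeroDivisors.ne_zero hy rfl

end basic

section gK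
variable {B B' : Type u} [CommRing B] [CommRing B']

/-- The induced map on residue fields. -/
noncomputable def gKmap (β : B →+* B') (q : Ideal B') [hq : q.IsPrime] :
    FractionRing (B ⧸ q.comap β) →+* FractionRing (B' ⧸ q) :=
  haveI : (q.comap β).IsPrime := Ideal.IsPrime.comap β
  IsFractionRing.lift
    (g := (algebraMap (B' ⧸ q) (FractionRing (B' ⧸ q))).comp (Ideal.quotientMap q β le_rfl))
    ((IsFractionRing.injective (B' ⧸ q) (FractionRing (B' ⧸ q))).comp
      Ideal.quotientMap_injective)

theorem gKmap_frK (β : B →+* B') (q : Ideal B') [hq : q.IsPrime] (b : B) :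
    gKmap β q (frK (q.comap β) b) = frK q (β b) := by
  haveI : (q.comap β).IsPrime := Ideal.IsPrime.comap β
  show IsFractionRing.lift _ (algebraMap (B ⧸ q.comap β) _ _) = _
  rw [IsFractionRing.lift_algebraMap]
  simp only [RingHom.comp_apply, frK, Ideal.quotientMap_mk]

theorem gKmap_injective (β : B →+* B') (q : Ideal B') [hq : q.IsPrime] :
    Function.Injective (gKmap β q) := by
  haveI : (q.comap β).IsPrime := Ideal.IsPrime.comap β
  exact RingHom.injective _

end gK

section pt
variable {A B : Type u} [CommRing A] [CommRing B] {f : A →+* B}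

/-- Membership of the fraction `b/c` in the valuation ring of a point. -/
def SpaPt.memW (x : SpaPt f) (b c : B) : Prop :=
  (haveI := x.isPrime; frK x.q b / frK x.q c) ∈ x.W

theorem SpaPt.ext'' {x y : SpaPt f} (hq : x.q = y.q)
    (hW : ∀ b c : B, x.memW b c ↔ y.memW b c) : x = y := by
  obtain ⟨q, hp, W, hv, hm⟩ := x
  obtain ⟨q', hp', W', hv', hm'⟩ := y
  replace hq : q = q' := hq
  subst hq
  haveI := hp
  have hWW : W = W' := by
    refine SetLike.ext fun z => ?_
    obtain ⟨b, c, -, rfl⟩ := frac_surjective q z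
    exact hW b c
  subst hWW
  rfl

theorem memW_denom_zero (x : SpaPt f) {b c : B} (hc : c ∈ x.q) : x.memW b c := by
  haveI := x.isPrime
  show frK x.q b / frK x.q c ∈ x.W
  rw [(frK_eq_zero_iff x.q).mpr hc, div_zero]
  exact zero_mem _

theorem memW_num_zero (x : SpaPt f) {b c : B} (hb : b ∈ x.q) : x.memW b c := by
  haveI := x.isPrime
  show frK x.q b / frK x.q c ∈ x.W
  rw [(frK_eq_zero_iff x.q).mpr hb, zero_div]
  exact zero_mem _

theorem memW_one (x : SpaPt f) : x.memW 1 1 := by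
  haveI := x.isPrime
  show frK x.q 1 / frK x.q 1 ∈ x.W
  rw [map_one, div_one]
  exact one_mem _

theorem memW_neg (x : SpaPt f) {b c : B} (h : x.memW b c) : x.memW (-b) c := by
  haveI := x.isPrime
  have h' : frK x.q b / frK x.q c ∈ x.W := h
  show frK x.q (-b) / frK x.q c ∈ x.W
  rw [map_neg, neg_div]
  exact neg_mem h'

theorem memW_mul (x : SpaPt f) {b c b' c' : B} (h : x.memW b c) (h' : x.memW b' c') :
    x.memW (b * b') (c * c') := by
  haveI := x.isPrime
  have h1 : frK x.q b / frK x.q c ∈ x.W := h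
  have h2 : frK x.q b' / frK x.q c' ∈ x.W := h'
  show frK x.q (b * b') / frK x.q (c * c') ∈ x.W
  rw [map_mul, map_mul, ← div_mul_div_comm]
  exact mul_mem h1 h2

theorem memW_add (x : SpaPt f) {b c b' c' : B} (hc : c ∉ x.q) (hc' : c' ∉ x.q)
    (h : x.memW b c) (h' : x.memW b' c') : x.memW (b * c' + c * b') (c * c') := by
  haveI := x.isPrime
  have h1 : frK x.q b / frK x.q c ∈ x.W := h
  have h2 : frK x.q b' / frK x.q c' ∈ x.W := h'
  show frK x.q (b * c' + c * b') / frK x.q (c * c') ∈ x.W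
  rw [map_add, map_mul, map_mul, map_mul,
    ← div_add_div _ _ (frK_ne_zero x.q hc) (frK_ne_zero x.q hc')]
  exact add_mem h1 h2

theorem memW_val (x : SpaPt f) (b c : B) : x.memW b c ∨ x.memW c b := by
  haveI := x.isPrime
  rcases x.val (frK x.q b / frK x.q c) with h | ⟨y, hy, h1⟩
  · exact Or.inl h
  · right
    have h2 : (frK x.q b / frK x.q c)⁻¹ = y := inv_eq_of_mul_eq_one_right h1
    rw [inv_div] at h2
    show frK x.q c / frK x.q b ∈ x.W
    rw [h2]
    exact hy

theorem memW_mapsTo (x : SpaPt f) (a : A) : x.memW (f a) 1 := by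
  haveI := x.isPrime
  show frK x.q (f a) / frK x.q 1 ∈ x.W
  rw [map_one, div_one]
  exact x.mapsTo a

theorem memW_cross (x : SpaPt f) {b c b' c' : B} (h : b' * c - b * c' ∈ x.q)
    (hc : c ∉ x.q) (hc' : c' ∉ x.q) (hm : x.memW b' c') : x.memW b c := by
  haveI := x.isPrime
  have e : frK x.q (b' * c) = frK x.q (b * c') := by
    rw [← sub_eq_zero, ← map_sub, frK_eq_zero_iff]
    exact h
  rw [map_mul, map_mul] at e
  have hm' : frK x.q b' / frK x.q c' ∈ x.W := hm
  show frK x.q b / frK x.q c ∈ x.W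
  have e2 : frK x.q b / frK x.q c = frK x.q b' / frK x.q c' := by
    rw [div_eq_div_iff (frK_ne_zero x.q hc) (frK_ne_zero x.q hc')]
    exact e.symm
  rw [e2]
  exact hm'

end pt

section square
variable {A B A' B' : Type u} [CommRing A] [CommRing B] [CommRing A'] [CommRing B']
  (f : A →+* B) (f' : A' →+* B') (α : A →+* A') (β : B →+* B')
  (hsq : β.comp f = f'.comp α)

theorem spaMap_q (x : SpaPt f') : (spaMap f f' α β hsq x).q = x.q.comap β := rfl

theorem spaMap_W (x : SpaPt f') :
    (spaMap f f' α β hsq x).W = x.W.comap (@gKmap _ _ _ _ β x.q x.isPrime) := rfl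

theorem memW_spaMap (x : SpaPt f') (b c : B) :
    (spaMap f f' α β hsq x).memW b c ↔ x.memW (β b) (β c) := by
  haveI := x.isPrime
  haveI : (x.q.comap β).IsPrime := Ideal.IsPrime.comap β
  show frK (x.q.comap β) b / frK (x.q.comap β) c ∈ (spaMap f f' α β hsq x).W ↔
    frK x.q (β b) / frK x.q (β c) ∈ x.W
  show gKmap β x.q (frK (x.q.comap β) b / frK (x.q.comap β) c) ∈ x.W ↔ _
  rw [map_div₀, gKmap_frK, gKmap_frK]

theorem mem_basicSet_iff (b₀ : B) {n : ℕ} (b : Fin n → B) (x : SpaPt f) :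
    x ∈ SpaPt.basicSet f b₀ b ↔
      (frK x.q b₀ ≠ 0 ∧ ∀ i, ∃ w ∈ x.W, frK x.q (b i) = frK x.q b₀ * w) := Iff.rfl

theorem spaMap_mem_basicSet_iff (b₀ : B) {n : ℕ} (b : Fin n → B) (x : SpaPt f') :
    spaMap f f' α β hsq x ∈ SpaPt.basicSet f b₀ b ↔
      (haveI := x.isPrime
       haveI : (x.q.comap β).IsPrime := Ideal.IsPrime.comap β
       frK (x.q.comap β) b₀ ≠ 0 ∧ ∀ i, ∃ w ∈ x.W.comap (gKmap β x.q),
        frK (x.q.comap β) (b i) = frK (x.q.comap β) b₀ * w) := Iff.rfl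

theorem spaMap_preimage_basicSet (b₀ : B) {n : ℕ} (b : Fin n → B) :
    (spaMap f f' α β hsq) ⁻¹' SpaPt.basicSet f b₀ b
      = SpaPt.basicSet f' (β b₀) (fun i => β (b i)) := by
  ext x
  haveI := x.isPrime
  haveI : (x.q.comap β).IsPrime := Ideal.IsPrime.comap β
  rw [Set.mem_preimage, spaMap_mem_basicSet_iff f f' α β hsq b₀ b x, mem_basicSet_iff]
  have hq0 : frK (x.q.comap β) b₀ = 0 ↔ frK x.q (β b₀) = 0 := by
    rw [frK_eq_zero_iff, frK_eq_zero_iff]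
    exact Ideal.mem_comap
  constructor
  · rintro ⟨h0, h⟩
    refine ⟨fun hz => h0 (hq0.mpr hz), fun i => ?_⟩
    obtain ⟨w, hw, hweq⟩ := h i
    rw [Subring.mem_comap] at hw
    refine ⟨gKmap β x.q w, hw, ?_⟩
    have := congrArg (gKmap β x.q) hweq
    rwa [map_mul, gKmap_frK, gKmap_frK] at this
  · rintro ⟨h0, h⟩
    have h0' : frK (x.q.comap β) b₀ ≠ 0 := fun hz => h0 (hq0.mp hz)
    refine ⟨h0', fun i => ?_⟩
    obtain ⟨w, hw, hweq⟩ := h i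
    refine ⟨frK (x.q.comap β) (b i) / frK (x.q.comap β) b₀, ?_, ?_⟩
    · rw [Subring.mem_comap, map_div₀, gKmap_frK, gKmap_frK, hweq,
        mul_comm, mul_div_assoc, div_self h0, mul_one]
      exact hw
    · rw [mul_comm, div_mul_cancel₀ _ h0']
end square


open SpaPt

/-- **Proposition (spa-limit).** Let `(Y_λ → X_λ)` be a directed inverse system of
morphisms of coherent schemes with affine transition morphisms and `(Y → X)` its inverse
limit; in the affine incarnation this is a directed system of ring homomorphisms
`f_λ : A_λ →+* B_λ` with colimit `f : A →+* B`.  Then the canonical map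
`Spa(Y, X) → lim_λ Spa(Y_λ, X_λ)` is a homeomorphism: it is a topological embedding whose
range is exactly the subspace of compatible families in `Π_λ Spa(B_λ, A_λ)`. -/
theorem spa_limit_homeomorph {Λ : Type u} [Preorder Λ] [IsDirected Λ (· ≤ ·)] [Nonempty Λ]
    (Aι Bι : Λ → Type u) [∀ l, CommRing (Aι l)] [∀ l, CommRing (Bι l)]
    (fι : ∀ l, Aι l →+* Bι l)
    (tA : ∀ ⦃l m : Λ⦄, l ≤ m → (Aι l →+* Aι m)) (tB : ∀ ⦃l m : Λ⦄, l ≤ m → (Bι l →+* Bι m))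
    (htAid : ∀ l, tA (le_refl l) = RingHom.id _)
    (htBid : ∀ l, tB (le_refl l) = RingHom.id _)
    (htAcomp : ∀ ⦃l m k : Λ⦄ (h₁ : l ≤ m) (h₂ : m ≤ k), (tA h₂).comp (tA h₁) = tA (h₁.trans h₂))
    (htBcomp : ∀ ⦃l m k : Λ⦄ (h₁ : l ≤ m) (h₂ : m ≤ k), (tB h₂).comp (tB h₁) = tB (h₁.trans h₂))
    (hsq : ∀ ⦃l m : Λ⦄ (h : l ≤ m), (tB h).comp (fι l) = (fι m).comp (tA h))
    (A B : Type u) [CommRing A] [CommRing B] (f : A →+* B)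
    (uA : ∀ l, Aι l →+* A) (uB : ∀ l, Bι l →+* B)
    (huA : ∀ ⦃l m : Λ⦄ (h : l ≤ m), (uA m).comp (tA h) = uA l)
    (huB : ∀ ⦃l m : Λ⦄ (h : l ≤ m), (uB m).comp (tB h) = uB l)
    (huf : ∀ l, (uB l).comp (fι l) = f.comp (uA l))
    (hAsurj : ∀ a : A, ∃ (l : Λ) (x : Aι l), uA l x = a)
    (hAinj : ∀ (l : Λ) (x y : Aι l), uA l x = uA l y → ∃ (m : Λ) (h : l ≤ m), tA h x = tA h y)
    (hBsurj : ∀ b : B, ∃ (l : Λ) (x : Bι l), uB l x = b)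
    (hBinj : ∀ (l : Λ) (x y : Bι l), uB l x = uB l y → ∃ (m : Λ) (h : l ≤ m), tB h x = tB h y) :
    Topology.IsEmbedding
        (fun (x : SpaPt f) (l : Λ) => spaMap (fι l) f (uA l) (uB l) (huf l) x) ∧
    Set.range (fun (x : SpaPt f) (l : Λ) => spaMap (fι l) f (uA l) (uB l) (huf l) x) =
      {s : ∀ l : Λ, SpaPt (fι l) |
        ∀ ⦃l m : Λ⦄ (h : l ≤ m), spaMap (fι l) (fι m) (tA h) (tB h) (hsq h) (s m) = s l} := by
    classical
  obtain ⟨l₀⟩ := ‹Nonempty Λ›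
  have hub : ∀ {l m : Λ} (h : l ≤ m) (c : Bι l), uB m (tB h c) = uB l c :=
    fun h c => RingHom.congr_fun (huB h) c
  have htb : ∀ {l m k : Λ} (h₁ : l ≤ m) (h₂ : m ≤ k) (c : Bι l),
      tB h₂ (tB h₁ c) = tB (h₁.trans h₂) c :=
    fun h₁ h₂ c => RingHom.congr_fun (htBcomp h₁ h₂) c
  have hpair : ∀ d e : B, ∃ (k : Λ) (d' e' : Bι k), uB k d' = d ∧ uB k e' = e := by
    intro d e
    obtain ⟨l1, d1, hd⟩ := hBsurj d
    obtain ⟨l2, e1, he⟩ := hBsurj e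
    obtain ⟨k, h1, h2⟩ := directed_of (· ≤ ·) l1 l2
    exact ⟨k, tB h1 d1, tB h2 e1, by rw [hub h1 d1, hd], by rw [hub h2 e1, he]⟩
  have hinj : Function.Injective
      (fun (x : SpaPt f) (l : Λ) => spaMap (fι l) f (uA l) (uB l) (huf l) x) := by
    intro x y h
    have h' : ∀ l, spaMap (fι l) f (uA l) (uB l) (huf l) x
        = spaMap (fι l) f (uA l) (uB l) (huf l) y := fun l => congrFun h l
    have hql : ∀ l, x.q.comap (uB l) = y.q.comap (uB l) :=
      fun l => congrArg (fun p : SpaPt (fι l) => p.q) (h' l)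
    have hq : x.q = y.q := by
      ext b
      obtain ⟨l, bl, rfl⟩ := hBsurj b
      rw [← Ideal.mem_comap (f := uB l) (K := x.q),
        ← Ideal.mem_comap (f := uB l) (K := y.q), hql l]
    refine SpaPt.ext'' hq fun b c => ?_
    obtain ⟨k, b', c', hb, hc⟩ := hpair b c
    subst hb
    subst hc
    rw [← memW_spaMap (fι k) f (uA k) (uB k) (huf k) x,
      ← memW_spaMap (fι k) f (uA k) (uB k) (huf k) y, h' k]
  have hfun : ∀ (x : SpaPt f) ⦃l m : Λ⦄ (h : l ≤ m),
      spaMap (fι l) (fι m) (tA h) (tB h) (hsq h) (spaMap (fι m) f (uA m) (uB m) (huf m) x)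
        = spaMap (fι l) f (uA l) (uB l) (huf l) x := by
    intro x l m h
    refine SpaPt.ext'' ?_ fun b c => ?_
    · show (x.q.comap (uB m)).comap (tB h) = x.q.comap (uB l)
      rw [Ideal.comap_comap, huB h]
    · rw [memW_spaMap, memW_spaMap, memW_spaMap, hub h b, hub h c]
  have hcont : Continuous
      (fun (x : SpaPt f) (l : Λ) => spaMap (fι l) f (uA l) (uB l) (huf l) x) := by
    refine continuous_pi fun l => ?_
    refine continuous_generateFrom_iff.mpr ?_
    rintro U ⟨b₀, n, b, rfl⟩
    have e1 : (fun (x : SpaPt f) => spaMap (fι l) f (uA l) (uB l) (huf l) x) ⁻¹'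
        SpaPt.basicSet (fι l) b₀ b = SpaPt.basicSet f (uB l b₀) (fun i => uB l (b i)) :=
      spaMap_preimage_basicSet (fι l) f (uA l) (uB l) (huf l) b₀ b
    rw [e1]
    exact TopologicalSpace.GenerateOpen.basic _ ⟨uB l b₀, n, fun i => uB l (b i), rfl⟩
  have htopo : (inferInstance : TopologicalSpace (SpaPt f)) =
      TopologicalSpace.induced
        (fun (x : SpaPt f) (l : Λ) => spaMap (fι l) f (uA l) (uB l) (huf l) x)
        inferInstance := by
    refine le_antisymm (continuous_iff_le_induced.mp hcont) (le_generateFrom ?_)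
    rintro U ⟨b₀, n, b, rfl⟩
    obtain ⟨lc, c₀, hc₀⟩ := hBsurj b₀
    choose lv cv hcv using fun i => hBsurj (b i)
    obtain ⟨k, hk⟩ := Finset.exists_le (insert lc (Finset.image lv Finset.univ))
    have hl₀ : lc ≤ k := hk _ (Finset.mem_insert_self _ _)
    have hlv : ∀ i, lv i ≤ k := fun i =>
      hk _ (Finset.mem_insert_of_mem (Finset.mem_image_of_mem _ (Finset.mem_univ i)))
    rw [isOpen_induced_iff]
    refine ⟨(fun s : ∀ l, SpaPt (fι l) => s k) ⁻¹'
        SpaPt.basicSet (fι k) (tB hl₀ c₀) (fun i => tB (hlv i) (cv i)),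
      (continuous_apply k).isOpen_preimage _
        (TopologicalSpace.GenerateOpen.basic _ ⟨_, _, _, rfl⟩), ?_⟩
    have e1 : (fun (x : SpaPt f) (l : Λ) => spaMap (fι l) f (uA l) (uB l) (huf l) x) ⁻¹'
        ((fun s : ∀ l, SpaPt (fι l) => s k) ⁻¹'
          SpaPt.basicSet (fι k) (tB hl₀ c₀) (fun i => tB (hlv i) (cv i)))
        = (fun (x : SpaPt f) => spaMap (fι k) f (uA k) (uB k) (huf k) x) ⁻¹'
            SpaPt.basicSet (fι k) (tB hl₀ c₀) (fun i => tB (hlv i) (cv i)) := rfl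
    rw [e1, spaMap_preimage_basicSet]
    have e0 : uB k (tB hl₀ c₀) = b₀ := by rw [hub hl₀ c₀, hc₀]
    have eb : (fun i => uB k (tB (hlv i) (cv i))) = b :=
      funext fun i => by rw [hub (hlv i) (cv i), hcv i]
    rw [e0, eb]
  constructor
  · exact ⟨⟨htopo⟩, hinj⟩
  · refine Set.Subset.antisymm ?_ ?_
    · rintro _ ⟨x, rfl⟩
      exact fun l m h => hfun x h
    · intro s hsc
      have hcq : ∀ ⦃l m : Λ⦄ (h : l ≤ m), (s m).q.comap (tB h) = (s l).q :=
        fun l m h => congrArg (fun p : SpaPt (fι l) => p.q) (hsc h)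
      have hqup : ∀ ⦃l m : Λ⦄ (h : l ≤ m) {c : Bι l}, c ∈ (s l).q → tB h c ∈ (s m).q := by
        intro l m h c hc
        rw [← hcq h] at hc
        exact hc
      have hqdown : ∀ ⦃l m : Λ⦄ (h : l ≤ m) {c : Bι l}, tB h c ∈ (s m).q → c ∈ (s l).q := by
        intro l m h c hc
        rw [← hcq h]
        exact hc
      have hWtr : ∀ ⦃l m : Λ⦄ (h : l ≤ m) (b c : Bι l),
          (s l).memW b c ↔ (s m).memW (tB h b) (tB h c) := by
        intro l m h b c
        rw [← hsc h]
        exact memW_spaMap (fι l) (fι m) (tA h) (tB h) (hsq h) (s m) b c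
      let q : Ideal B :=
        { carrier := {b | ∃ (l : Λ) (c : Bι l), uB l c = b ∧ c ∈ (s l).q}
          zero_mem' := ⟨l₀, 0, map_zero _, zero_mem _⟩
          add_mem' := by
            rintro a b ⟨l, c, rfl, hc⟩ ⟨m, d, rfl, hd⟩
            obtain ⟨k, h1, h2⟩ := directed_of (· ≤ ·) l m
            exact ⟨k, tB h1 c + tB h2 d, by rw [map_add, hub h1 c, hub h2 d],
              add_mem (hqup h1 hc) (hqup h2 hd)⟩
          smul_mem' := by
            intro r b hb
            obtain ⟨l, c, rfl, hc⟩ := hb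
            obtain ⟨m, r', rfl⟩ := hBsurj r
            obtain ⟨k, h1, h2⟩ := directed_of (· ≤ ·) l m
            refine ⟨k, tB h2 r' * tB h1 c, ?_, Ideal.mul_mem_left _ _ (hqup h1 hc)⟩
            rw [smul_eq_mul, map_mul, hub h1 c, hub h2 r'] }
      have hqmem : ∀ b : B, b ∈ q ↔ ∃ (l : Λ) (c : Bι l), uB l c = b ∧ c ∈ (s l).q :=
        fun b => Iff.rfl
      have hqp : q.IsPrime := by
        constructor
        · intro htop
          have h1 : (1 : B) ∈ q := htop ▸ Submodule.mem_top
          obtain ⟨l, c, hcl, hc⟩ := (hqmem 1).mp h1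
          have h2 : uB l c = uB l 1 := by rw [hcl, map_one]
          obtain ⟨m, h, he⟩ := hBinj l c 1 h2
          have h3 := hqup h hc
          rw [he, map_one] at h3
          exact (s m).isPrime.ne_top ((Ideal.eq_top_iff_one _).mpr h3)
        · intro a b hab
          obtain ⟨k0, a', b', rfl, rfl⟩ := hpair a b
          obtain ⟨l, c, hceq, hc⟩ := (hqmem _).mp hab
          obtain ⟨k, h3, h4⟩ := directed_of (· ≤ ·) k0 l
          have he : uB k (tB h4 c) = uB k (tB h3 a' * tB h3 b') := by
            rw [map_mul, hub h3 a', hub h3 b', hub h4 c, hceq]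
          obtain ⟨k', h5, he'⟩ := hBinj k _ _ he
          rw [map_mul] at he'
          have hc' : tB h5 (tB h4 c) ∈ (s k').q := hqup h5 (hqup h4 hc)
          rw [he'] at hc'
          rcases (s k').isPrime.mem_or_mem hc' with hmem | hmem
          · left
            refine (hqmem _).mpr ⟨k', tB h5 (tB h3 a'), ?_, hmem⟩
            rw [hub h5 _, hub h3 a']
          · right
            refine (hqmem _).mpr ⟨k', tB h5 (tB h3 b'), ?_, hmem⟩
            rw [hub h5 _, hub h3 b']
      haveI := hqp
      have hcomap : ∀ l, q.comap (uB l) = (s l).q := by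
        intro l
        ext c
        rw [Ideal.mem_comap]
        constructor
        · intro hmem
          obtain ⟨m, d, hd, hdq⟩ := (hqmem _).mp hmem
          obtain ⟨k, h1, h2⟩ := directed_of (· ≤ ·) m l
          have he : uB k (tB h1 d) = uB k (tB h2 c) := by rw [hub h1 d, hub h2 c, hd]
          obtain ⟨k', h3, he'⟩ := hBinj k _ _ he
          have h4 := hqup h3 (hqup h1 hdq)
          rw [he', htb h2 h3 c] at h4
          exact hqdown (h2.trans h3) h4
        · intro hc
          exact (hqmem _).mpr ⟨l, c, rfl, hc⟩
      have hfrK_mem : ∀ (k : Λ) (c : Bι k), frK q (uB k c) = 0 ↔ c ∈ (s k).q := by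
        intro k c
        rw [frK_eq_zero_iff, ← hcomap k, Ideal.mem_comap]
      have htransfer : ∀ (k : Λ) (b c b' c' : Bι k),
          frK q (uB k b') / frK q (uB k c') = frK q (uB k b) / frK q (uB k c) →
          (s k).memW b' c' → (s k).memW b c := by
        intro k b c b' c' he hm
        by_cases hc : c ∈ (s k).q
        · exact memW_denom_zero _ hc
        · have hKc : frK q (uB k c) ≠ 0 := fun h0 => hc ((hfrK_mem k c).mp h0)
          by_cases hc' : c' ∈ (s k).q
          · have h0 : frK q (uB k c') = 0 := (hfrK_mem k c').mpr hc'
            rw [h0, div_zero] at he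
            rcases div_eq_zero_iff.mp he.symm with hb0 | hc0
            · exact memW_num_zero _ ((hfrK_mem k b).mp hb0)
            · exact absurd hc0 hKc
          · have hKc' : frK q (uB k c') ≠ 0 := fun h0 => hc' ((hfrK_mem k c').mp h0)
            rw [div_eq_div_iff hKc' hKc] at he
            have hz : frK q (uB k (b' * c - b * c')) = 0 := by
              rw [map_sub (uB k), map_mul (uB k), map_mul (uB k), map_sub (frK q),
                map_mul (frK q), map_mul (frK q), sub_eq_zero]
              exact he
            have hd : b' * c - b * c' ∈ (s k).q := by
              rw [← hcomap k, Ideal.mem_comap]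
              exact (frK_eq_zero_iff q).mp hz
            exact memW_cross (s k) hd hc hc' hm
      let W0 : Subring (FractionRing (B ⧸ q)) :=
        { carrier := {z | ∃ (l : Λ) (b c : Bι l),
            (s l).memW b c ∧ frK q (uB l b) / frK q (uB l c) = z}
          one_mem' := ⟨l₀, 1, 1, memW_one _, by rw [map_one, map_one, div_one]⟩
          zero_mem' := ⟨l₀, 0, 1, memW_num_zero _ (zero_mem _),
            by rw [map_zero, map_zero, zero_div]⟩
          neg_mem' := by
            rintro z ⟨l, b, c, hm, rfl⟩
            exact ⟨l, -b, c, memW_neg _ hm, by rw [map_neg, map_neg, neg_div]⟩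
          mul_mem' := by
            rintro z z' ⟨l, b, c, hm, rfl⟩ ⟨m, b', c', hm', rfl⟩
            obtain ⟨k, h1, h2⟩ := directed_of (· ≤ ·) l m
            refine ⟨k, tB h1 b * tB h2 b', tB h1 c * tB h2 c',
              memW_mul _ ((hWtr h1 b c).mp hm) ((hWtr h2 b' c').mp hm'), ?_⟩
            rw [← hub h1 b, ← hub h1 c, ← hub h2 b', ← hub h2 c', div_mul_div_comm]
            simp only [map_mul]
          add_mem' := by
            rintro z z' ⟨l, b, c, hm, rfl⟩ ⟨m, b', c', hm', rfl⟩
            obtain ⟨k, h1, h2⟩ := directed_of (· ≤ ·) l m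
            replace hm := (hWtr h1 b c).mp hm
            replace hm' := (hWtr h2 b' c').mp hm'
            rw [← hub h1 b, ← hub h1 c, ← hub h2 b', ← hub h2 c']
            by_cases hc : tB h1 c ∈ (s k).q
            · rw [(hfrK_mem k _).mpr hc, div_zero, zero_add]
              exact ⟨k, tB h2 b', tB h2 c', hm', rfl⟩
            · by_cases hc' : tB h2 c' ∈ (s k).q
              · rw [(hfrK_mem k _).mpr hc', div_zero, add_zero]
                exact ⟨k, tB h1 b, tB h1 c, hm, rfl⟩
              · refine ⟨k, tB h1 b * tB h2 c' + tB h1 c * tB h2 b', tB h1 c * tB h2 c',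
                  memW_add _ hc hc' hm hm', ?_⟩
                rw [div_add_div _ _ (fun h0 => hc ((hfrK_mem k _).mp h0))
                  (fun h0 => hc' ((hfrK_mem k _).mp h0))]
                simp only [map_add, map_mul] }
      have hW0mem : ∀ z, z ∈ W0 ↔ ∃ (l : Λ) (b c : Bι l),
          (s l).memW b c ∧ frK q (uB l b) / frK q (uB l c) = z := fun z => Iff.rfl
      have hrep : ∀ z : FractionRing (B ⧸ q), ∃ (k : Λ) (b c : Bι k),
          c ∉ (s k).q ∧ frK q (uB k b) / frK q (uB k c) = z := by
        intro z
        obtain ⟨d, e, he, hz⟩ := frac_surjective q z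
        obtain ⟨k, d', e', hd', he'⟩ := hpair d e
        refine ⟨k, d', e', ?_, by rw [hd', he', hz]⟩
        intro hmem
        exact he ((hqmem e).mpr ⟨k, e', he', hmem⟩)
      let x : SpaPt f :=
        { q := q
          isPrime := hqp
          W := W0
          val := by
            intro z
            obtain ⟨k, b, c, hc, rfl⟩ := hrep z
            rcases memW_val (s k) b c with h | h
            · exact Or.inl ((hW0mem _).mpr ⟨k, b, c, h, rfl⟩)
            · by_cases hb : b ∈ (s k).q
              · exact Or.inl ((hW0mem _).mpr ⟨k, b, c, memW_num_zero _ hb, rfl⟩)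
              · right
                refine ⟨frK q (uB k c) / frK q (uB k b),
                  (hW0mem _).mpr ⟨k, c, b, h, rfl⟩, ?_⟩
                rw [div_mul_div_comm, mul_comm (frK q (uB k c)) (frK q (uB k b)),
                  div_self (mul_ne_zero (fun h0 => hb ((hfrK_mem k b).mp h0))
                    (fun h0 => hc ((hfrK_mem k c).mp h0)))]
          mapsTo := by
            intro a
            obtain ⟨l, a', rfl⟩ := hAsurj a
            have hfa : f (uA l a') = uB l (fι l a') := (RingHom.congr_fun (huf l) a').symm
            show frK q (f (uA l a')) ∈ W0
            refine (hW0mem _).mpr ⟨l, fι l a', 1, memW_mapsTo (s l) a', ?_⟩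
            rw [map_one, map_one, div_one, hfa] }
      refine ⟨x, funext fun l => ?_⟩
      refine SpaPt.ext'' ?_ fun b c => ?_
      · show q.comap (uB l) = (s l).q
        exact hcomap l
      · rw [memW_spaMap (fι l) f (uA l) (uB l) (huf l) x b c]
        show frK q (uB l b) / frK q (uB l c) ∈ W0 ↔ (s l).memW b c
        constructor
        · intro hmem
          obtain ⟨m, b', c', hm, he⟩ := (hW0mem _).mp hmem
          obtain ⟨k, h1, h2⟩ := directed_of (· ≤ ·) m l
          rw [hWtr h2 b c]
          refine htransfer k _ _ _ _ ?_ ((hWtr h1 b' c').mp hm)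
          rw [hub h1 b', hub h1 c', hub h2 b, hub h2 c]
          exact he
        · intro hmem
          exact (hW0mem _).mpr ⟨l, b, c, hmem, rfl⟩
end
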